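/- arXiv:2111.13200 — 4 statements merged into one kernel-verified Lean document; each statement's English description precedes it below -/
import Mathlib

section
/- Let N ≥ 1 and let κ_N be a kernel on S with κ_N(r,s) ≤ N for all r, s ∈ S. Then for every k ∈ ℕ₀^S with k ≠ 0, (1 − ‖κ_N‖_∞/N)^{|k|²/2} · N^{1−|k|} · τ(k;κ_N) ≤ p_N(k) ≤ N^{1−|k|} · τ(k;κ_N), where ‖κ_N‖_∞ = max_{r,s∈S} κ_N(r,s). -/
open scoped Classical ENNReal
open Filter MeasureTheory

noncomputable section

/-- The set of ordered pairs `(i,j)` of vertices with `i < j`, representing the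
potential edges of a graph on `Fin n`. -/
def upperPairs (n : ℕ) : Finset (Fin n × Fin n) :=
  Finset.univ.filter fun q => q.1 < q.2

/-- The simple graph on `Fin n` determined by a finite set of (ordered) edges. -/
def graphOf {n : ℕ} (E : Finset (Fin n × Fin n)) : SimpleGraph (Fin n) :=
  SimpleGraph.fromRel fun i j => (i, j) ∈ E

/-- `PConn n x p` is the probability that the inhomogeneous random graph `G(n, x, p)`,
with type vector `x` and independent edges where `{i,j}` is present with probability
`p (x i) (x j)`, is connected; written as a finite sum over connected graphs. -/
def PConn {S : Type*} (n : ℕ) (x : Fin n → S) (p : S → S → ℝ) : ℝ :=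
  ∑ E ∈ (upperPairs n).powerset.filter (fun E => (graphOf E).Connected),
    (∏ q ∈ E, p (x q.1) (x q.2)) * ∏ q ∈ upperPairs n \ E, (1 - p (x q.1) (x q.2))

/-- Sum over all spanning trees (connected graphs with `n - 1` edges) on `Fin n` of the
product of the kernel over the edges. -/
def treeWeight {S : Type*} (n : ℕ) (x : Fin n → S) (κ : S → S → ℝ) : ℝ :=
  ∑ E ∈ (upperPairs n).powerset.filter
      (fun E => (graphOf E).Connected ∧ E.card + 1 = n),
    ∏ q ∈ E, κ (x q.1) (x q.2)

/-- A canonical list of types compatible with the multiplicity vector `k`. -/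
def compatList {S : Type*} [Fintype S] (k : S → ℕ) : List S :=
  (∑ s : S, (k s) • ({s} : Multiset S)).toList

lemma compatList_length {S : Type*} [Fintype S] (k : S → ℕ) :
    (compatList k).length = ∑ s : S, k s := by
  simp [compatList]

/-- A canonical type vector compatible with `k`, i.e. with `∑ i δ_{x i} = k`. -/
def compatVec {S : Type*} [Fintype S] (k : S → ℕ) : Fin (∑ s : S, k s) → S :=
  fun i => (compatList k).get (Fin.cast (compatList_length k).symm i)

/-- `tau κ k` is the spanning-tree weight `τ(k; κ)`. -/
def tau {S : Type*} [Fintype S] (κ : S → S → ℝ) (k : S → ℕ) : ℝ :=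
  treeWeight (∑ s : S, k s) (compatVec k) κ

/-- `pN κN N k` is the probability that the inhomogeneous random graph on a vertex set
with type composition `k` and edge probabilities `min 1 (κN/N)` is connected. -/
def pN {S : Type*} [Fintype S] (κN : S → S → ℝ) (N : ℕ) (k : S → ℕ) : ℝ :=
  PConn (∑ s : S, k s) (compatVec k) fun r s => min 1 (κN r s / N)

/-- Extended-real logarithm, with `elog x = -∞` for `x ≤ 0`. -/
def elog (x : ℝ) : EReal := if x ≤ 0 then (⊥ : EReal) else ((Real.log x : ℝ) : EReal)

/-- The nonnegative part of `-log u`, equal to `∞` if `u ≤ 0`. -/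
def negLogPart (u : ℝ) : ℝ≥0∞ := if u ≤ 0 then ⊤ else ENNReal.ofReal (-Real.log u)

/-- The relative-entropy summand `x log (x / d)` with conventions `0 log 0 = 0` and
`x log (x/0) = +∞` for `x ≠ 0`. -/
def entTerm (x d : ℝ) : EReal :=
  if x = 0 then (0 : EReal) else if d ≤ 0 then (⊤ : EReal)
  else ((x * Real.log (x / d) : ℝ) : EReal)

/-- `‖κ‖_∞ = max_{r,s} κ r s`. -/
def kernelSup {S : Type*} [Fintype S] [Nonempty S] (κ : S → S → ℝ) : ℝ :=
  Finset.univ.sup' Finset.univ_nonempty fun r =>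
    Finset.univ.sup' Finset.univ_nonempty fun s => κ r s

/-- `Σ(κ, ν)`, the `ℓ²(ν)`-operator norm of the matrix `(κ r s * ν s)_{r,s}`. -/
def sigmaOp {S : Type*} [Fintype S] (κ : S → S → ℝ) (ν : S → ℝ) : ℝ :=
  sSup { t : ℝ | ∃ f : S → ℝ, (∀ s, 0 ≤ f s) ∧ (∑ r : S, ν r * f r ^ 2) ≤ 1 ∧
    t = Real.sqrt (∑ r : S, ν r * (∑ s : S, κ r s * f s * ν s) ^ 2) }

/-- Irreducibility of the kernel `κ` with respect to `ν`. -/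
def Irred {S : Type*} (κ : S → S → ℝ) (ν : S → ℝ) : Prop :=
  ∀ A : Set S, (∀ r ∈ A, ∀ s, s ∉ A → 0 < ν r → 0 < ν s → κ r s = 0) →
    (∀ r ∈ A, ν r = 0) ∨ (∀ s, s ∉ A → ν s = 0)

/-- The generating series `Γ_r(θ) = ∑_k τ(k) k_r ∏_s θ_s^{k_s}/k_s! ∈ [0,∞]`. -/
def Gamma0 {S : Type*} [Fintype S] (κ : S → S → ℝ) (θ : S → ℝ) (r : S) : ℝ≥0∞ :=
  ∑' k : S → ℕ,
    ENNReal.ofReal (tau κ k * (k r : ℝ) * ∏ s : S, θ s ^ (k s) / (Nat.factorial (k s) : ℝ))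

/-- `χ(κ, θ)`: the infimum over probability vectors `w ≪ θ` of
`∑_r w_r log (w_r / ((κ w)_r θ_r))`. -/
def chiFn {S : Type*} [Fintype S] (κ : S → S → ℝ) (θ : S → ℝ) : EReal :=
  sInf { v : EReal | ∃ w : S → ℝ, (∀ r, 0 ≤ w r) ∧ ((∑ r : S, w r) = 1) ∧
    (∀ r, θ r = 0 → w r = 0) ∧
    v = ∑ r : S, entTerm (w r) ((∑ s : S, κ r s * w s) * θ r) }

/-- `Δ_r(k)`: the sum over directed spanning trees of the support of `k` rooted at `r`
(encoded as parent maps `f`, edges `(f s, s)` directed away from the root) of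
`∏ κ(f s, s) * k (f s)`. -/
def Delta {S : Type*} [Fintype S] [DecidableEq S] (κ : S → S → ℝ) (k : S → ℕ) (r : S) : ℝ :=
  ∑ f ∈ (Finset.univ : Finset (S → S)).filter (fun f =>
      (∀ s, (s = r ∨ k s = 0) → f s = s) ∧
      ∀ s, 0 < k s → s ≠ r → (0 < k (f s) ∧ ∃ n, f^[n] s = r)),
    ∏ s ∈ Finset.univ.filter (fun s => 0 < k s ∧ s ≠ r), (κ (f s) s * (k (f s) : ℝ))

/-- The reference weight `τ(k) ∏_s μ_s^{k_s}/k_s!`. -/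
def rhoMu {S : Type*} [Fintype S] (κ : S → S → ℝ) (μ : S → ℝ) (k : S → ℕ) : ℝ :=
  tau κ k * ∏ s : S, μ s ^ (k s) / (Nat.factorial (k s) : ℝ)

/-- The microscopic rate function `I_Mi`. -/
def IMi {S : Type*} [Fintype S] (κ : S → S → ℝ) (μ : S → ℝ) (lam : (S → ℕ) → ℝ) : EReal :=
  (∑' k : S → ℕ, entTerm (lam k) (rhoMu κ μ k))
  + ((∑' k : S → ℕ, lam k * (((∑ s : S, k s : ℕ) : ℝ) - 1) : ℝ) : EReal)
  + ((((1 : ℝ)/2) * ∑ r : S, ∑ s : S, (∑' k : S → ℕ, lam k * (k r : ℝ)) * κ r s * μ s : ℝ) : EReal)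

/-- The minimizer candidate `λ_k(c) = τ(k) ∏_s (c_s e^{-(κ c)_s})^{k_s}/k_s!`. -/
def lamC {S : Type*} [Fintype S] (κ : S → S → ℝ) (c : S → ℝ) (k : S → ℕ) : ℝ :=
  tau κ k * ∏ s : S, (c s * Real.exp (-(∑ t : S, κ s t * c t))) ^ (k s) / (Nat.factorial (k s) : ℝ)

/-- The mesoscopic rate function `I_Me`. -/
def IMe {S : Type*} [Fintype S] (κ : S → S → ℝ) (μ ν : S → ℝ) : EReal :=
  (∑ r : S, entTerm (ν r) ((∑ s : S, κ r s * ν s) * μ r))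
  + ((((1 : ℝ)/2) * ∑ r : S, ∑ s : S, ν r * κ r s * μ s : ℝ) : EReal)

/-- `b` is a solution of the fixed-point system for `c`:
`b ∈ [0,∞)^S`, `b ≤ c` and `(κ(c-b))_r b_r = c_r - b_r` for all `r`. -/
def IsFPSol {S : Type*} [Fintype S] (κ : S → S → ℝ) (c b : S → ℝ) : Prop :=
  (∀ r, 0 ≤ b r) ∧ (∀ r, b r ≤ c r) ∧
    ∀ r, (∑ s : S, κ r s * (c s - b s)) * b r = c r - b r

/-- The macroscopic rate summand `f_Ma`. -/
def fMa {S : Type*} [Fintype S] (κ : S → S → ℝ) (μ y : S → ℝ) : EReal :=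
  (∑ r : S, entTerm (y r) ((1 - Real.exp (-(∑ s : S, κ r s * y s))) * μ r))
  + ((((1 : ℝ)/2) * ∑ r : S, ∑ s : S, y r * κ r s * (μ s - y s) : ℝ) : EReal)

/-- The functional `G_c(b)`. -/
def Gc {S : Type*} [Fintype S] (κ : S → S → ℝ) (μ c b : S → ℝ) : EReal :=
  (((∑ r : S, b r * Real.log (b r / μ r))
      - (1/2) * ∑ r : S, ∑ s : S, b r * κ r s * b s
      + (1/2) * ∑ r : S, ∑ s : S, c r * κ r s * μ s : ℝ) : EReal)
  + ∑ r : S, entTerm (c r - b r) ((∑ s : S, κ r s * (c s - b s)) * μ r)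

/-- `λ_k(t) = t^{|k|-1} τ(k) e^{-t⟨k,κμ⟩} ∏_r μ_r^{k_r}/k_r!`. -/
def lamT {S : Type*} [Fintype S] (κ : S → S → ℝ) (μ : S → ℝ) (k : S → ℕ) (t : ℝ) : ℝ :=
  t ^ ((∑ s : S, k s) - 1) * tau κ k *
    Real.exp (-t * ∑ r : S, ∑ s : S, (k r : ℝ) * κ r s * μ s) *
    ∏ r : S, μ r ^ (k r) / (Nat.factorial (k r) : ℝ)

/-!
The upper bound is a union bound: a connected graph contains a spanning tree, and a fixed
tree `T` is present with probability `∏_{e ∈ T} p_e`; since a spanning tree of `Fin n` has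
`n - 1` edges and `p = κ/N`, this sum is `N^{1-n} τ`. For the lower bound keep only the
outcomes in which the graph *is* a spanning tree: such an outcome has probability
`∏_{e ∈ T} p_e ∏_{e ∉ T} (1 - p_e)`, and each of the at most `n²/2` absent edges costs a
factor at least `1 - ‖κ‖_∞/N`.
-/

open Finset

section SubsetProb

variable {α : Type*} [DecidableEq α]

lemma sum_filter_superset_prod_mul_prod_sdiff {R : Type*} [CommSemiring R]
    {U T : Finset α} (hT : T ⊆ U) (f g : α → R) :
    ∑ E ∈ U.powerset with T ⊆ E, (∏ q ∈ E, f q) * ∏ q ∈ U \ E, g q =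
      (∏ q ∈ T, f q) * ∏ q ∈ U \ T, (f q + g q) := by
  have himage : {E ∈ U.powerset | T ⊆ E} = (U \ T).powerset.image (T ∪ ·) := by
    ext E
    simp only [mem_filter, mem_powerset, mem_image]
    constructor
    · rintro ⟨hEU, hTE⟩
      exact ⟨E \ T, sdiff_subset_sdiff hEU subset_rfl, union_sdiff_of_subset hTE⟩
    · rintro ⟨F, hF, rfl⟩
      exact ⟨union_subset hT (hF.trans sdiff_subset), subset_union_left⟩
  have hdisj : ∀ F ∈ (U \ T).powerset, Disjoint T F := fun F hF =>
    disjoint_of_subset_right (mem_powerset.1 hF) disjoint_sdiff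
  rw [himage, sum_image, prod_add, mul_sum]
  · refine sum_congr rfl fun F hF => ?_
    rw [prod_union (hdisj F hF), sdiff_union_distrib, ← Finset.sdiff_sdiff_left', mul_assoc]
  · intro F hF F' hF' h
    simpa [union_sdiff_cancel_left (hdisj F hF), union_sdiff_cancel_left (hdisj F' hF')]
      using congrArg (· \ T) h

/-- The probability that the random subset of `U` containing each `q` independently with
probability `p q` equals `E`. -/
def subsetProb (U : Finset α) (p : α → ℝ) (E : Finset α) : ℝ :=
  (∏ q ∈ E, p q) * ∏ q ∈ U \ E, (1 - p q)

variable {U : Finset α} {p : α → ℝ}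

lemma subsetProb_nonneg (h0 : ∀ q, 0 ≤ p q) (h1 : ∀ q, p q ≤ 1) (E : Finset α) :
    0 ≤ subsetProb U p E :=
  mul_nonneg (prod_nonneg fun q _ => h0 q) (prod_nonneg fun q _ => sub_nonneg.2 (h1 q))

lemma sum_subsetProb_superset {T : Finset α} (hT : T ⊆ U) :
    ∑ E ∈ U.powerset with T ⊆ E, subsetProb U p E = ∏ q ∈ T, p q := by
  simp only [subsetProb, sum_filter_superset_prod_mul_prod_sdiff hT, add_sub_cancel,
    prod_const_one, mul_one]

lemma sum_subsetProb_le_sum_prod (h0 : ∀ q, 0 ≤ p q) (h1 : ∀ q, p q ≤ 1)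
    {C Tr : Finset (Finset α)} (hC : C ⊆ U.powerset) (hTr : Tr ⊆ U.powerset)
    (hcover : ∀ E ∈ C, ∃ T ∈ Tr, T ⊆ E) :
    ∑ E ∈ C, subsetProb U p E ≤ ∑ T ∈ Tr, ∏ q ∈ T, p q :=
  calc ∑ E ∈ C, subsetProb U p E
      ≤ ∑ E ∈ C, ∑ T ∈ Tr with T ⊆ E, subsetProb U p E := sum_le_sum fun E hE => by
        obtain ⟨T, hT, hTE⟩ := hcover E hE
        exact single_le_sum (f := fun _ => subsetProb U p E)
          (fun _ _ => subsetProb_nonneg h0 h1 E) (mem_filter.2 ⟨hT, hTE⟩)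
    _ = ∑ T ∈ Tr, ∑ E ∈ C with T ⊆ E, subsetProb U p E :=
        sum_comm' fun E T => by simp only [mem_filter]; tauto
    _ ≤ ∑ T ∈ Tr, ∑ E ∈ U.powerset with T ⊆ E, subsetProb U p E :=
        sum_le_sum fun T _ => sum_le_sum_of_subset_of_nonneg (filter_subset_filter _ hC)
          fun E _ _ => subsetProb_nonneg h0 h1 E
    _ = ∑ T ∈ Tr, ∏ q ∈ T, p q :=
        sum_congr rfl fun T hT => sum_subsetProb_superset (mem_powerset.1 (hTr hT))

lemma prod_mul_pow_card_sdiff_le_subsetProb (h0 : ∀ q, 0 ≤ p q) {c : ℝ} (hc0 : 0 ≤ c)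
    (hc : ∀ q, c ≤ 1 - p q) (E : Finset α) :
    (∏ q ∈ E, p q) * c ^ #(U \ E) ≤ subsetProb U p E := by
  refine mul_le_mul_of_nonneg_left ?_ (prod_nonneg fun q _ => h0 q)
  rw [← prod_const]
  exact prod_le_prod (fun _ _ => hc0) fun q _ => hc q

end SubsetProb

section GraphOf

variable {n : ℕ}

lemma mem_upperPairs {q : Fin n × Fin n} : q ∈ upperPairs n ↔ q.1 < q.2 := by
  simp [upperPairs]

lemma two_mul_card_upperPairs_le (n : ℕ) : 2 * #(upperPairs n) ≤ n ^ 2 := by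
  set swapped := (upperPairs n).map (Equiv.prodComm (Fin n) (Fin n)).toEmbedding
  have hdisj : Disjoint (upperPairs n) swapped := by
    simp only [swapped, disjoint_left, mem_map_equiv, mem_upperPairs]
    exact fun _ => lt_asymm
  calc 2 * #(upperPairs n) = #(upperPairs n ∪ swapped) := by
        rw [card_union_of_disjoint hdisj, card_map, two_mul]
    _ ≤ #(univ : Finset (Fin n × Fin n)) := card_le_univ _
    _ = n ^ 2 := by simp [sq]

lemma graphOf_adj {E : Finset (Fin n × Fin n)} {a b : Fin n} :
    (graphOf E).Adj a b ↔ a ≠ b ∧ ((a, b) ∈ E ∨ (b, a) ∈ E) := by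
  simp [graphOf, SimpleGraph.fromRel_adj]

lemma graphOf_filter_adj {E : Finset (Fin n × Fin n)} {H : SimpleGraph (Fin n)}
    (hH : H ≤ graphOf E) : graphOf {q ∈ E | H.Adj q.1 q.2} = H := by
  ext a b
  simp only [graphOf_adj, mem_filter]
  constructor
  · rintro ⟨-, ⟨-, h⟩ | ⟨-, h⟩⟩
    exacts [h, h.symm]
  · intro h
    obtain ⟨hab, hE | hE⟩ := graphOf_adj.1 (hH h)
    exacts [⟨hab, .inl ⟨hE, h⟩⟩, ⟨hab, .inr ⟨hE, h.symm⟩⟩]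

lemma card_edgeFinset_graphOf {E : Finset (Fin n × Fin n)} (hE : E ⊆ upperPairs n) :
    #(graphOf E).edgeFinset = #E := by
  have himage : (graphOf E).edgeFinset = E.image fun q => s(q.1, q.2) := by
    ext ⟨a, b⟩
    simp only [SimpleGraph.mem_edgeFinset, SimpleGraph.mem_edgeSet, graphOf_adj, mem_image]
    constructor
    · rintro ⟨-, h | h⟩
      exacts [⟨(a, b), h, rfl⟩, ⟨(b, a), h, Sym2.eq_swap⟩]
    · rintro ⟨q, hq, hs⟩
      have hlt := mem_upperPairs.1 (hE hq)
      rcases Sym2.eq_iff.1 hs with ⟨rfl, rfl⟩ | ⟨rfl, rfl⟩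
      exacts [⟨hlt.ne, .inl hq⟩, ⟨hlt.ne', .inr hq⟩]
  rw [himage, card_image_of_injOn]
  intro q hq q' hq' h
  have hlt := mem_upperPairs.1 (hE hq)
  have hlt' := mem_upperPairs.1 (hE hq')
  rcases Sym2.eq_iff.1 h with ⟨h1, h2⟩ | ⟨h1, h2⟩
  · exact Prod.ext h1 h2
  · exact absurd (h1 ▸ h2 ▸ hlt') (lt_asymm hlt)

lemma exists_subset_connected_card_add_one {E : Finset (Fin n × Fin n)}
    (hE : E ⊆ upperPairs n) (hconn : (graphOf E).Connected) :
    ∃ T ⊆ E, (graphOf T).Connected ∧ #T + 1 = n := by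
  obtain ⟨H, hHE, hH⟩ := hconn.exists_isTree_le
  set T := {q ∈ E | H.Adj q.1 q.2}
  have hT : graphOf T = H := graphOf_filter_adj hHE
  refine ⟨T, filter_subset _ _, hT ▸ hH.connected, ?_⟩
  have hcard := hT ▸ hH.card_edgeFinset
  rwa [card_edgeFinset_graphOf ((filter_subset _ _).trans hE), Fintype.card_fin] at hcard

end GraphOf

section ConnectionProbability

variable {S : Type*} (n : ℕ) (x : Fin n → S)

lemma treeWeight_div (κ : S → S → ℝ) (a : ℝ) :
    treeWeight n x (fun r s => κ r s / a) = a ^ (1 - (n : ℤ)) * treeWeight n x κ := by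
  rw [treeWeight, treeWeight, mul_sum]
  refine sum_congr rfl fun T hT => ?_
  have hn : (1 - n : ℤ) = -(#T : ℤ) := by have := (mem_filter.1 hT).2.2; omega
  rw [prod_div_distrib, prod_const, hn, zpow_neg, zpow_natCast, div_eq_inv_mul]

variable {n x}

lemma PConn_le_treeWeight {p : S → S → ℝ} (h0 : ∀ r s, 0 ≤ p r s)
    (h1 : ∀ r s, p r s ≤ 1) :
    PConn n x p ≤ treeWeight n x p :=
  sum_subsetProb_le_sum_prod (fun _ => h0 _ _) (fun _ => h1 _ _)
    (filter_subset _ _) (fun _ hT => (mem_filter.1 hT).1) fun E hE => by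
      obtain ⟨hEU, hconn⟩ := mem_filter.1 hE
      obtain ⟨T, hTE, hT⟩ := exists_subset_connected_card_add_one (mem_powerset.1 hEU) hconn
      exact ⟨T, mem_filter.2 ⟨mem_powerset.2 (hTE.trans (mem_powerset.1 hEU)), hT⟩, hTE⟩

lemma rpow_mul_treeWeight_le_PConn {p : S → S → ℝ} (h0 : ∀ r s, 0 ≤ p r s) {c : ℝ}
    (hc0 : 0 ≤ c) (hc1 : c ≤ 1) (hc : ∀ r s, c ≤ 1 - p r s) :
    c ^ ((n : ℝ) ^ 2 / 2) * treeWeight n x p ≤ PConn n x p := by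
  have h1 (r s : S) : p r s ≤ 1 := by linarith [hc r s]
  have hcard_absent (T : Finset (Fin n × Fin n)) :
      (#(upperPairs n \ T) : ℝ) ≤ (n : ℝ) ^ 2 / 2 := by
    have := card_le_card (sdiff_subset : upperPairs n \ T ⊆ upperPairs n)
    have := two_mul_card_upperPairs_le n
    rw [le_div_iff₀ two_pos]
    exact_mod_cast (by omega : #(upperPairs n \ T) * 2 ≤ n ^ 2)
  calc c ^ ((n : ℝ) ^ 2 / 2) * treeWeight n x p
      ≤ ∑ T ∈ (upperPairs n).powerset with (graphOf T).Connected ∧ #T + 1 = n,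
          (∏ q ∈ T, p (x q.1) (x q.2)) * c ^ #(upperPairs n \ T) := by
        rw [treeWeight, mul_comm, sum_mul]
        refine sum_le_sum fun T _ =>
          mul_le_mul_of_nonneg_left ?_ (prod_nonneg fun _ _ => h0 _ _)
        rw [← Real.rpow_natCast c]
        exact Real.rpow_le_rpow_of_exponent_ge' hc0 hc1 (Nat.cast_nonneg _) (hcard_absent T)
    _ ≤ ∑ T ∈ (upperPairs n).powerset with (graphOf T).Connected ∧ #T + 1 = n,
          subsetProb (upperPairs n) (fun q => p (x q.1) (x q.2)) T :=
        sum_le_sum fun T _ =>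
          prod_mul_pow_card_sdiff_le_subsetProb (fun _ => h0 _ _) hc0 (fun _ => hc _ _) T
    _ ≤ PConn n x p :=
        sum_le_sum_of_subset_of_nonneg (monotone_filter_right _ fun _ _ => And.left)
          fun T _ _ => subsetProb_nonneg (fun _ => h0 _ _) (fun _ => h1 _ _) T

end ConnectionProbability

lemma le_kernelSup {S : Type*} [Fintype S] [Nonempty S] (κ : S → S → ℝ) (r s : S) :
    κ r s ≤ kernelSup κ :=
  (le_sup' (fun s => κ r s) (mem_univ s)).trans
    (le_sup' (fun r => univ.sup' univ_nonempty fun s => κ r s) (mem_univ r))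

theorem microscopic_connProb_bounds_general
    {S : Type*} [Fintype S] [Nonempty S]
    (N : ℕ)
    (κN : S → S → ℝ)
    (hκN0 : ∀ r s, 0 ≤ κN r s) (hκNle : ∀ r s, κN r s ≤ N)
    (k : S → ℕ) :
    (1 - kernelSup κN / N) ^ ((((∑ s : S, k s : ℕ) : ℝ)) ^ 2 / 2) *
        ((N : ℝ) ^ (1 - ((∑ s : S, k s : ℕ) : ℤ)) * tau κN k) ≤ pN κN N k ∧
      pN κN N k ≤ (N : ℝ) ^ (1 - ((∑ s : S, k s : ℕ) : ℤ)) * tau κN k := by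
  have hp : (fun r s => min 1 (κN r s / N)) = fun r s => κN r s / N := by
    ext r s
    exact min_eq_right (div_le_one_of_le₀ (hκNle r s) N.cast_nonneg)
  have hp0 (r s : S) : 0 ≤ κN r s / N := div_nonneg (hκN0 r s) N.cast_nonneg
  have hp_le_sup (r s : S) : κN r s / N ≤ kernelSup κN / N :=
    div_le_div_of_nonneg_right (le_kernelSup κN r s) N.cast_nonneg
  have hsup : kernelSup κN / N ≤ 1 :=
    div_le_one_of_le₀ (sup'_le _ _ fun r _ => sup'_le _ _ fun s _ => hκNle r s) N.cast_nonneg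
  obtain ⟨r₀⟩ := ‹Nonempty S›
  have hsup0 : 0 ≤ kernelSup κN / N := (hp0 r₀ r₀).trans (hp_le_sup r₀ r₀)
  rw [pN, tau, hp, ← treeWeight_div]
  exact ⟨rpow_mul_treeWeight_le_PConn hp0 (by linarith) (by linarith)
      fun r s => by linarith [hp_le_sup r s],
    PConn_le_treeWeight hp0 fun r s => by linarith [hp_le_sup r s]⟩

/-- two-sided bounds for the connection probability of microscopic clusters. -/
theorem microscopic_connProb_bounds
    {S : Type*} [Fintype S] [DecidableEq S] [Nonempty S]
    (N : ℕ) (hN : 1 ≤ N)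
    (κN : S → S → ℝ) (hκNsym : ∀ r s, κN r s = κN s r)
    (hκN0 : ∀ r s, 0 ≤ κN r s) (hκNle : ∀ r s, κN r s ≤ N)
    (k : S → ℕ) (hk : k ≠ 0) :
    (1 - kernelSup κN / N) ^ ((((∑ s : S, k s : ℕ) : ℝ)) ^ 2 / 2) *
        ((N : ℝ) ^ (1 - ((∑ s : S, k s : ℕ) : ℤ)) * tau κN k) ≤ pN κN N k ∧
      pN κN N k ≤ (N : ℝ) ^ (1 - ((∑ s : S, k s : ℕ) : ℤ)) * tau κN k :=
  microscopic_connProb_bounds_general N κN hκN0 hκNle k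

end
end

section
/- Let N ≥ 1 and let κ_N be a kernel on S with κ_N(r,s) ≤ N for all r, s ∈ S. For all h', h ∈ ℕ₀^S with h' ≠ 0 and h' ≤ h componentwise, p_N(h) ≥ p_N(h') · ∏_{r∈S} (1 − e^{−(κ_N h')_r / N})^{h_r − h'_r}. -/
open scoped Classical ENNReal
open Filter MeasureTheory

noncomputable section

/-!
Embed a vertex set of composition `h'` into one of composition `h` by a type-preserving
injection `e`. The random graph on the larger set is connected as soon as the graph induced on
the image of `e` is connected and every vertex outside the image has an edge into it. These
events are determined by pairwise disjoint sets of potential edges, so they are independent and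
their probabilities multiply: the first one has probability `p_N(h')`, and a vertex of type `r`
outside the image misses it with probability
`∏_s (1 - min(1, κ_N(r,s)/N))^{h'_s} ≤ exp(-(κ_N h')_r / N)`.
-/

lemma SimpleGraph.connected_of_comap_connected {V W : Type*} {G : SimpleGraph W} (e : V ↪ W)
    (hc : (G.comap e).Connected) (hadj : ∀ w ∉ Set.range e, ∃ v, G.Adj w (e v)) :
    G.Connected := by
  obtain ⟨v₀⟩ := hc.nonempty
  have hreach : ∀ v, G.Reachable (e v₀) (e v) := fun v =>
    (hc.preconnected v₀ v).map (SimpleGraph.Embedding.comap e G).toHom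
  refine (G.connected_iff_exists_forall_reachable).2 ⟨e v₀, fun w => ?_⟩
  by_cases hw : w ∈ Set.range e
  · obtain ⟨v, rfl⟩ := hw
    exact hreach v
  · obtain ⟨v, hv⟩ := hadj w hw
    exact (hreach v).trans hv.symm.reachable

open Finset in
lemma Function.Embedding.exists_comp_eq_of_card_fiber_le {α β γ : Type*}
    [Fintype α] [Fintype β] {y : α → γ} {z : β → γ}
    (h : ∀ c, #{a | y a = c} ≤ #{b | z b = c}) :
    ∃ e : α ↪ β, ∀ a, z (e a) = y a := by
  have hfib : ∀ c, Nonempty ({a // y a = c} ↪ {b // z b = c}) := fun c =>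
    Function.Embedding.nonempty_of_card_le (by simpa only [Fintype.card_subtype] using h c)
  let e := ((Equiv.sigmaFiberEquiv y).symm.toEmbedding.trans
    (Function.Embedding.sigmaMap (Function.Embedding.refl γ) fun c => (hfib c).some)).trans
    (Equiv.sigmaFiberEquiv z).toEmbedding
  exact ⟨e, fun a => ((hfib (y a)).some _).2⟩

namespace ConnProb

open Finset

section Bernoulli

variable {α : Type*} [DecidableEq α]

def bernoulliWeight (T : Finset α) (f : α → ℝ) (E : Finset α) : ℝ :=
  (∏ q ∈ E, f q) * ∏ q ∈ T \ E, (1 - f q)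

lemma bernoulliWeight_nonneg {f : α → ℝ} (hf0 : ∀ q, 0 ≤ f q) (hf1 : ∀ q, f q ≤ 1)
    (T E : Finset α) : 0 ≤ bernoulliWeight T f E :=
  mul_nonneg (prod_nonneg fun q _ => hf0 q) (prod_nonneg fun q _ => sub_nonneg.2 (hf1 q))

lemma sum_bernoulliWeight (T : Finset α) (f : α → ℝ) :
    ∑ E ∈ T.powerset, bernoulliWeight T f E = 1 := by
  simp only [bernoulliWeight, ← prod_add, add_sub_cancel, prod_const_one]

lemma sum_bernoulliWeight_nonempty (T : Finset α) (f : α → ℝ) :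
    ∑ E ∈ T.powerset with E.Nonempty, bernoulliWeight T f E = 1 - ∏ q ∈ T, (1 - f q) := by
  have hempty : ∑ E ∈ T.powerset with ¬E.Nonempty, bernoulliWeight T f E
      = ∏ q ∈ T, (1 - f q) := by
    rw [filter_congr fun E _ => not_nonempty_iff_eq_empty, filter_eq',
      if_pos (empty_mem_powerset T), sum_singleton, bernoulliWeight, prod_empty, sdiff_empty,
      one_mul]
  linarith [sum_bernoulliWeight T f, sum_filter_add_sum_filter_not T.powerset (·.Nonempty)
    (bernoulliWeight T f)]

lemma bernoulliWeight_image {γ : Type*} [DecidableEq γ] {g : γ → α} {T E : Finset γ}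
    (hg : Set.InjOn g T) (hE : E ⊆ T) (f : α → ℝ) :
    bernoulliWeight (T.image g) f (E.image g) = bernoulliWeight T (f ∘ g) E := by
  rw [bernoulliWeight, bernoulliWeight, ← image_sdiff_of_injOn hg hE,
    prod_image (hg.mono hE), prod_image (hg.mono sdiff_subset)]
  rfl

lemma bernoulliWeight_union {s t : Finset α} (hst : Disjoint s t) (f : α → ℝ) {E : Finset α}
    (hE : E ⊆ s ∪ t) :
    bernoulliWeight (s ∪ t) f E
      = bernoulliWeight s f (E ∩ s) * bernoulliWeight t f (E ∩ t) := by
  have hsplit : E = E ∩ s ∪ E ∩ t := by rw [← inter_union_distrib_left, inter_eq_left.2 hE]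
  have hrest : (s ∪ t) \ E = s \ (E ∩ s) ∪ t \ (E ∩ t) := by
    ext q
    simp only [Finset.mem_sdiff, Finset.mem_union, Finset.mem_inter]
    tauto
  have hprod : ∏ q ∈ E, f q = (∏ q ∈ E ∩ s, f q) * ∏ q ∈ E ∩ t, f q := by
    rw [← prod_union (hst.mono inter_subset_right inter_subset_right), ← hsplit]
  rw [bernoulliWeight, bernoulliWeight, bernoulliWeight, hrest, hprod,
    prod_union (hst.mono sdiff_subset sdiff_subset)]
  ring

lemma sum_powerset_union_mul {β : Type*} [CommSemiring β] {s t : Finset α} (hst : Disjoint s t)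
    (F G : Finset α → β) :
    ∑ E ∈ (s ∪ t).powerset, F (E ∩ s) * G (E ∩ t)
      = (∑ A ∈ s.powerset, F A) * ∑ B ∈ t.powerset, G B := by
  rw [sum_mul_sum, ← sum_product']
  refine sum_nbij' (fun E => (E ∩ s, E ∩ t)) (fun AB => AB.1 ∪ AB.2) ?_ ?_ ?_ ?_
    fun _ _ => rfl
  · intro E _
    simp [inter_subset_right]
  · intro AB hAB
    simp only [mem_product, mem_powerset] at hAB ⊢
    exact union_subset_union hAB.1 hAB.2
  · intro E hE
    simp only [mem_powerset] at hE
    simp only [← inter_union_distrib_left, inter_eq_left.2 hE]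
  · intro AB hAB
    simp only [mem_product, mem_powerset] at hAB
    have h1 : (AB.1 ∪ AB.2) ∩ s = AB.1 := by
      rw [union_inter_distrib_right, inter_eq_left.2 hAB.1,
        disjoint_iff_inter_eq_empty.1 (hst.symm.mono_left hAB.2), union_empty]
    have h2 : (AB.1 ∪ AB.2) ∩ t = AB.2 := by
      rw [union_inter_distrib_right, inter_eq_left.2 hAB.2,
        disjoint_iff_inter_eq_empty.1 (hst.mono_left hAB.1), empty_union]
    simp [h1, h2]

theorem sum_bernoulliWeight_forall_blocks {ι : Type*} [DecidableEq ι] (f : α → ℝ)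
    (I : Finset ι) (t : ι → Finset α) (P : ι → Finset α → Prop)
    [∀ i, DecidablePred (P i)] (hdisj : (I : Set ι).PairwiseDisjoint t) (U : Finset α)
    (htU : ∀ i ∈ I, t i ⊆ U) :
    ∑ E ∈ U.powerset with ∀ i ∈ I, P i (E ∩ t i), bernoulliWeight U f E
      = ∏ i ∈ I, ∑ F ∈ (t i).powerset with P i F, bernoulliWeight (t i) f F := by
  induction I using Finset.induction_on generalizing U with
  | empty => simp [sum_bernoulliWeight]
  | @insert i₀ I hi₀ ih =>
    set U' := U \ t i₀
    have hU : U = t i₀ ∪ U' := (union_sdiff_of_subset (htU i₀ (mem_insert_self _ _))).symm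
    have hd : Disjoint (t i₀) U' := disjoint_sdiff
    have htU' : ∀ i ∈ I, t i ⊆ U' := fun i hi =>
      subset_sdiff.2 ⟨htU i (mem_insert_of_mem hi),
        hdisj (mem_insert_of_mem hi) (mem_insert_self _ _) (ne_of_mem_of_not_mem hi hi₀)⟩
    rw [prod_insert hi₀, ← ih (hdisj.subset (by simp)) U' htU', sum_filter, sum_filter,
      sum_filter]
    simp_rw [hU]
    rw [← sum_powerset_union_mul hd]
    refine sum_congr rfl fun E hE => ?_
    have hcond : (∀ i ∈ I, P i (E ∩ U' ∩ t i)) ↔ ∀ i ∈ I, P i (E ∩ t i) :=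
      forall₂_congr fun i hi => by rw [inter_assoc, inter_eq_right.2 (htU' i hi)]
    simp only [forall_mem_insert, hcond, ite_zero_mul_ite_zero,
      bernoulliWeight_union hd f (mem_powerset.1 hE)]

end Bernoulli

section Pairs

variable {β : Type*} [LinearOrder β]

def sortPair (a b : β) : β × β := if a < b then (a, b) else (b, a)

lemma sortPair_eq_sortPair_iff {a b c d : β} :
    sortPair a b = sortPair c d ↔ (a = c ∧ b = d) ∨ (a = d ∧ b = c) := by
  unfold sortPair
  split_ifs <;> simp only [Prod.mk.injEq] <;> grind

lemma sortPair_comm (a b : β) : sortPair a b = sortPair b a :=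
  sortPair_eq_sortPair_iff.2 (Or.inr ⟨rfl, rfl⟩)

lemma sortPair_of_lt {a b : β} (h : a < b) : sortPair a b = (a, b) := if_pos h

lemma apply_sortPair {γ : Type*} {g : β → β → γ} (hg : ∀ a b, g a b = g b a) (a b : β) :
    g (sortPair a b).1 (sortPair a b).2 = g a b := by
  unfold sortPair
  split_ifs
  exacts [rfl, hg b a]

end Pairs

section EdgeBlocks

variable {m n : ℕ}

lemma mem_upperPairs {q : Fin n × Fin n} : q ∈ upperPairs n ↔ q.1 < q.2 := by
  simp [upperPairs]

lemma sortPair_mem_upperPairs {a b : Fin n} (h : a ≠ b) : sortPair a b ∈ upperPairs n := by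
  rcases h.lt_or_gt with h | h
  · rw [sortPair_of_lt h, mem_upperPairs]; exact h
  · rw [sortPair_comm, sortPair_of_lt h, mem_upperPairs]; exact h

lemma graphOf_adj_iff {E : Finset (Fin n × Fin n)} (hE : E ⊆ upperPairs n) {a b : Fin n} :
    (graphOf E).Adj a b ↔ a ≠ b ∧ sortPair a b ∈ E := by
  rw [graphOf, SimpleGraph.fromRel_adj]
  refine and_congr_right fun hab => ?_
  have hnot : ∀ {c d : Fin n}, d < c → (c, d) ∉ E := fun hdc hcd =>
    (mem_upperPairs.1 (hE hcd)).not_gt hdc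
  rcases hab.lt_or_gt with h | h
  · simp [sortPair_of_lt h, hnot h]
  · simp [sortPair_comm a b, sortPair_of_lt h, hnot h]

lemma graphOf_mono {E F : Finset (Fin n × Fin n)} (h : E ⊆ F) : graphOf E ≤ graphOf F := by
  intro a b
  simp only [graphOf, SimpleGraph.fromRel_adj]
  exact And.imp_right (Or.imp (@h _) (@h _))

variable (e : Fin m ↪ Fin n)

def innerPairs : Finset (Fin n × Fin n) :=
  (upperPairs m).image fun q => sortPair (e q.1) (e q.2)

def crossPairs (v : Fin n) : Finset (Fin n × Fin n) :=
  univ.image fun j => sortPair v (e j)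

lemma injOn_sortPair_upperPairs :
    Set.InjOn (fun q : Fin m × Fin m => sortPair (e q.1) (e q.2)) (upperPairs m) := by
  intro q hq q' hq' hqq
  simp only [mem_upperPairs, mem_coe] at hq hq' hqq
  rcases sortPair_eq_sortPair_iff.1 hqq with ⟨h1, h2⟩ | ⟨h1, h2⟩
  · exact Prod.ext (e.injective h1) (e.injective h2)
  · rw [e.injective h1, e.injective h2] at hq
    exact absurd (hq.trans hq') (lt_irrefl _)

lemma innerPairs_subset : innerPairs e ⊆ upperPairs n := by
  simp only [innerPairs, image_subset_iff]
  intro q hq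
  exact sortPair_mem_upperPairs (e.injective.ne (mem_upperPairs.1 hq).ne)

lemma crossPairs_subset {v : Fin n} (hv : v ∉ Set.range e) : crossPairs e v ⊆ upperPairs n := by
  simp only [crossPairs, image_subset_iff]
  exact fun j _ => sortPair_mem_upperPairs fun h => hv ⟨j, h.symm⟩

lemma disjoint_innerPairs_crossPairs {v : Fin n} (hv : v ∉ Set.range e) :
    Disjoint (innerPairs e) (crossPairs e v) := by
  simp only [innerPairs, crossPairs, disjoint_left, mem_image, mem_univ, true_and,
    not_exists, forall_exists_index, and_imp]
  rintro _ q _ rfl j hj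
  rcases sortPair_eq_sortPair_iff.1 hj with ⟨h, _⟩ | ⟨h, _⟩ <;> exact hv ⟨_, h.symm⟩

lemma disjoint_crossPairs {v w : Fin n} (hv : v ∉ Set.range e) (hvw : v ≠ w) :
    Disjoint (crossPairs e v) (crossPairs e w) := by
  simp only [crossPairs, disjoint_left, mem_image, mem_univ, true_and,
    not_exists, forall_exists_index]
  rintro _ i rfl j hj
  rcases sortPair_eq_sortPair_iff.1 hj with ⟨h, _⟩ | ⟨_, h⟩
  · exact hvw h.symm
  · exact hv ⟨_, h⟩

lemma comap_graphOf_image {E : Finset (Fin m × Fin m)} (hE : E ⊆ upperPairs m) :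
    (graphOf (E.image fun q => sortPair (e q.1) (e q.2))).comap e = graphOf E := by
  have hsub := (image_subset_image hE).trans (innerPairs_subset e)
  ext i j
  rw [SimpleGraph.comap_adj, graphOf_adj_iff hsub, graphOf, SimpleGraph.fromRel_adj,
    e.injective.ne_iff]
  simp only [mem_image, sortPair_eq_sortPair_iff, e.injective.eq_iff]
  refine and_congr_right fun _ => ⟨?_, ?_⟩
  · rintro ⟨q, hq, ⟨rfl, rfl⟩ | ⟨rfl, rfl⟩⟩
    exacts [Or.inl hq, Or.inr hq]
  · rintro (h | h)
    exacts [⟨_, h, Or.inl ⟨rfl, rfl⟩⟩, ⟨_, h, Or.inr ⟨rfl, rfl⟩⟩]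

end EdgeBlocks

section Estimate

variable {S : Type*} {m n : ℕ} (e : Fin m ↪ Fin n) (x : Fin n → S) {p : S → S → ℝ}

lemma sum_innerPairs_connected (hsymm : ∀ r s, p r s = p s r) :
    ∑ F ∈ (innerPairs e).powerset with ((graphOf F).comap e).Connected,
        bernoulliWeight (innerPairs e) (fun q => p (x q.1) (x q.2)) F
      = PConn m (x ∘ e) p := by
  have hinj := injOn_sortPair_upperPairs e
  have hval : (fun q : Fin n × Fin n => p (x q.1) (x q.2)) ∘
      (fun q : Fin m × Fin m => sortPair (e q.1) (e q.2)) = fun q => p (x (e q.1)) (x (e q.2)) :=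
    funext fun q => apply_sortPair (g := fun a b => p (x a) (x b)) (fun _ _ => hsymm _ _) _ _
  rw [innerPairs, powerset_image, sum_filter, sum_image (image_injOn_powerset_of_injOn hinj),
    PConn, sum_filter]
  refine sum_congr rfl fun E hE => ?_
  rw [mem_powerset] at hE
  simp only [comap_graphOf_image e hE, bernoulliWeight_image hinj hE, hval]
  rfl

lemma sum_crossPairs_nonempty (hsymm : ∀ r s, p r s = p s r) {v : Fin n}
    (hv : v ∉ Set.range e) :
    ∑ F ∈ (crossPairs e v).powerset with F.Nonempty,
        bernoulliWeight (crossPairs e v) (fun q => p (x q.1) (x q.2)) F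
      = 1 - ∏ j, (1 - p (x v) (x (e j))) := by
  have hinj : Set.InjOn (fun j => sortPair v (e j)) (univ : Finset (Fin m)) := by
    intro i _ j _ hij
    rcases sortPair_eq_sortPair_iff.1 hij with ⟨_, h⟩ | ⟨h, _⟩
    · exact e.injective h
    · exact absurd ⟨j, h.symm⟩ hv
  rw [sum_bernoulliWeight_nonempty, crossPairs, prod_image hinj]
  exact congrArg _ <| prod_congr rfl fun j _ => congrArg (1 - ·) <|
    apply_sortPair (g := fun a b => p (x a) (x b)) (fun _ _ => hsymm _ _) _ _

lemma graphOf_connected_of_inner_of_cross {E : Finset (Fin n × Fin n)} (hE : E ⊆ upperPairs n)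
    (hinner : ((graphOf (E ∩ innerPairs e)).comap e).Connected)
    (hcross : ∀ v ∉ Set.range e, (E ∩ crossPairs e v).Nonempty) :
    (graphOf E).Connected := by
  refine SimpleGraph.connected_of_comap_connected e
    (hinner.mono (SimpleGraph.comap_monotone e (graphOf_mono inter_subset_left))) fun w hw => ?_
  obtain ⟨q, hq⟩ := hcross w hw
  obtain ⟨hqE, hq⟩ := mem_inter.1 hq
  obtain ⟨j, -, rfl⟩ := mem_image.1 hq
  exact ⟨j, (graphOf_adj_iff hE).2 ⟨fun h => hw ⟨j, h.symm⟩, hqE⟩⟩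

lemma PConn_nonneg (hp0 : ∀ r s, 0 ≤ p r s) (hp1 : ∀ r s, p r s ≤ 1) : 0 ≤ PConn n x p :=
  sum_nonneg fun _ _ => bernoulliWeight_nonneg (fun _ => hp0 _ _) (fun _ => hp1 _ _) _ _

theorem PConn_comp_mul_prod_le (hsymm : ∀ r s, p r s = p s r) (hp0 : ∀ r s, 0 ≤ p r s)
    (hp1 : ∀ r s, p r s ≤ 1) :
    PConn m (x ∘ e) p * ∏ v ∈ (univ.map e)ᶜ, (1 - ∏ j, (1 - p (x v) (x (e j))))
      ≤ PConn n x p := by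
  have hout : ∀ {v}, v ∈ (univ.map e)ᶜ ↔ v ∉ Set.range e := by simp
  let t : Option (Fin n) → Finset (Fin n × Fin n) :=
    fun o => o.elim (innerPairs e) (crossPairs e)
  let P : Option (Fin n) → Finset (Fin n × Fin n) → Prop :=
    fun o F => o.elim ((graphOf F).comap e).Connected fun _ => F.Nonempty
  have hdisj : (insertNone (univ.map e)ᶜ : Set (Option (Fin n))).PairwiseDisjoint t := by
    rintro (_ | v) hv (_ | w) hw hvw <;> simp only [mem_coe, some_mem_insertNone, hout] at hv hw
    · exact absurd rfl hvw
    · exact disjoint_innerPairs_crossPairs e hw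
    · exact (disjoint_innerPairs_crossPairs e hv).symm
    · exact disjoint_crossPairs e hv fun h => hvw (congrArg some h)
  have htU : ∀ o ∈ insertNone (univ.map e)ᶜ, t o ⊆ upperPairs n := by
    rintro (_ | v) hv
    · exact innerPairs_subset e
    · exact crossPairs_subset e (hout.1 (some_mem_insertNone.1 hv))
  have hblocks : ∏ o ∈ insertNone (univ.map e)ᶜ, ∑ F ∈ (t o).powerset with P o F,
        bernoulliWeight (t o) (fun q => p (x q.1) (x q.2)) F
      = PConn m (x ∘ e) p * ∏ v ∈ (univ.map e)ᶜ, (1 - ∏ j, (1 - p (x v) (x (e j)))) := by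
    rw [prod_insertNone]
    congr 1
    · convert sum_innerPairs_connected e x hsymm using 3 <;> rfl
    · refine prod_congr rfl fun v hv => ?_
      convert sum_crossPairs_nonempty e x hsymm (hout.1 hv) using 3 <;> rfl
  rw [← hblocks, ← sum_bernoulliWeight_forall_blocks _ _ t P hdisj _ htU, PConn]
  refine sum_le_sum_of_subset_of_nonneg ?_ fun E _ _ =>
    bernoulliWeight_nonneg (fun _ => hp0 _ _) (fun _ => hp1 _ _) _ _
  intro E hE
  simp only [mem_filter, mem_powerset] at hE ⊢
  refine ⟨hE.1, graphOf_connected_of_inner_of_cross e hE.1 (hE.2 none (by simp)) fun v hv => ?_⟩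
  exact hE.2 (some v) (some_mem_insertNone.2 (hout.2 hv))

end Estimate

lemma prod_compl_map_comp {S M : Type*} [Fintype S] [CommMonoid M] {m n : ℕ}
    (e : Fin m ↪ Fin n) (x : Fin n → S) (g : S → M) :
    ∏ v ∈ (univ.map e)ᶜ, g (x v) = ∏ r, g r ^ (#{v | x v = r} - #{j | x (e j) = r}) := by
  rw [← prod_fiberwise' _ x g]
  refine prod_congr rfl fun r _ => ?_
  have hsplit :
      #{v | x v = r} = #{v ∈ univ.map e | x v = r} + #{v ∈ (univ.map e)ᶜ | x v = r} := by
    rw [← card_union_of_disjoint (disjoint_filter_filter disjoint_compl_right), ← filter_union,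
      union_compl]
  have hrange : #{v ∈ univ.map e | x v = r} = #{j | x (e j) = r} := by
    rw [filter_map, card_map]; rfl
  rw [prod_const, hsplit, hrange, Nat.add_sub_cancel_left]

section TypeVectors

variable {S : Type*} [Fintype S]

lemma card_filter_compatVec_eq (k : S → ℕ) (s : S) : #{i | compatVec k i = s} = k s := by
  have hmap : univ.val.map (compatVec k) = ∑ r, k r • {r} := by
    rw [Fin.univ_val_map, show List.ofFn (compatVec k) = compatList k from
      (List.ofFn_congr (compatList_length k) _).symm.trans (List.ofFn_get _),
      compatList, Multiset.coe_toList]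
  have hcount := congrArg (Multiset.count s) hmap
  simp only [Multiset.count_map, Multiset.count_sum', Multiset.count_nsmul,
    Multiset.count_singleton, mul_ite, mul_one, mul_zero, sum_ite_eq, mem_univ, if_true] at hcount
  rw [← hcount, card_def, filter_val]
  exact congrArg _ (Multiset.filter_congr fun _ _ => eq_comm)

lemma prod_comp_compatVec {M : Type*} [CommMonoid M] (k : S → ℕ) (g : S → M) :
    ∏ i, g (compatVec k i) = ∏ s, g s ^ k s := by
  rw [← prod_fiberwise' univ (compatVec k) g]
  exact prod_congr rfl fun s _ => by rw [prod_const, card_filter_compatVec_eq]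

lemma prod_one_sub_min_le_exp (κ : S → S → ℝ) (N : ℕ) (k : S → ℕ) (r : S) :
    ∏ i, (1 - min 1 (κ r (compatVec k i) / N)) ≤ Real.exp (-(∑ s, κ r s * k s) / N) := by
  have hle : ∀ t : ℝ, 1 - min 1 t ≤ Real.exp (-t) := fun t => by
    rcases le_total t 1 with ht | ht
    · rw [min_eq_right ht]; linarith [Real.add_one_le_exp (-t)]
    · rw [min_eq_left ht, sub_self]; exact (Real.exp_pos _).le
  calc ∏ i, (1 - min 1 (κ r (compatVec k i) / N))
      = ∏ s, (1 - min 1 (κ r s / N)) ^ k s :=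
        prod_comp_compatVec k fun s => 1 - min 1 (κ r s / N)
    _ ≤ ∏ s, Real.exp (-(κ r s / N)) ^ k s :=
        prod_le_prod (fun s _ => pow_nonneg (sub_nonneg.2 (min_le_left _ _)) _)
          fun s _ => pow_le_pow_left₀ (sub_nonneg.2 (min_le_left _ _)) (hle _) _
    _ = Real.exp (-(∑ s, κ r s * k s) / N) := by
        simp only [← Real.exp_nat_mul, ← Real.exp_sum]
        congr 1
        rw [neg_div, sum_div, ← sum_neg_distrib]
        exact sum_congr rfl fun s _ => by ring

end TypeVectors

end ConnProb

open Finset ConnProb in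
theorem connProb_monotone_estimate_general
    {S : Type*} [Fintype S]
    (N : ℕ)
    (κN : S → S → ℝ) (hκNsym : ∀ r s, κN r s = κN s r)
    (hκN0 : ∀ r s, 0 ≤ κN r s)
    (h' h : S → ℕ) (hle : ∀ s, h' s ≤ h s) :
    pN κN N h' *
        ∏ r : S, (1 - Real.exp (-(∑ s : S, κN r s * (h' s : ℝ)) / N)) ^ (h r - h' r)
      ≤ pN κN N h := by
  set p : S → S → ℝ := fun r s => min 1 (κN r s / N)
  have hp0 : ∀ r s, 0 ≤ p r s := fun r s =>
    le_min zero_le_one (div_nonneg (hκN0 r s) N.cast_nonneg)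
  have hp1 : ∀ r s, p r s ≤ 1 := fun r s => min_le_left _ _
  obtain ⟨e, he⟩ := Function.Embedding.exists_comp_eq_of_card_fiber_le
    (y := compatVec h') (z := compatVec h) fun s => by
      rw [card_filter_compatVec_eq, card_filter_compatVec_eq]
      exact hle s
  set x := compatVec h
  have hcard : ∀ r, #{v | x v = r} - #{j | x (e j) = r} = h r - h' r := fun r => by
    simp only [x, he, card_filter_compatVec_eq]
  calc pN κN N h' * ∏ r, (1 - Real.exp (-(∑ s, κN r s * (h' s : ℝ)) / N)) ^ (h r - h' r)
      = pN κN N h' *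
          ∏ v ∈ (univ.map e)ᶜ, (1 - Real.exp (-(∑ s, κN (x v) s * (h' s : ℝ)) / N)) := by
        rw [prod_compl_map_comp e x fun r => 1 - Real.exp (-(∑ s, κN r s * (h' s : ℝ)) / N)]
        simp only [hcard]
    _ ≤ PConn _ (x ∘ e) p *
          ∏ v ∈ (univ.map e)ᶜ, (1 - ∏ j, (1 - p (x v) (x (e j)))) := by
        rw [show x ∘ e = compatVec h' from funext he]
        refine mul_le_mul_of_nonneg_left (prod_le_prod (fun v _ => ?_) fun v _ => ?_)
          (PConn_nonneg _ hp0 hp1)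
        · refine sub_nonneg.2 (Real.exp_le_one_iff.2 (div_nonpos_of_nonpos_of_nonneg ?_ ?_))
          · exact neg_nonpos.2 (sum_nonneg fun s _ => mul_nonneg (hκN0 _ _) (Nat.cast_nonneg _))
          · exact N.cast_nonneg
        · simp only [p, he]
          exact sub_le_sub_left (prod_one_sub_min_le_exp κN N h' (x v)) 1
    _ ≤ pN κN N h :=
        PConn_comp_mul_prod_le e x (fun r s => by simp only [p, hκNsym r s]) hp0 hp1

/-- monotonicity estimate for connection probabilities. -/
theorem connProb_monotone_estimate
    {S : Type*} [Fintype S] [DecidableEq S] [Nonempty S]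
    (N : ℕ) (hN : 1 ≤ N)
    (κN : S → S → ℝ) (hκNsym : ∀ r s, κN r s = κN s r)
    (hκN0 : ∀ r s, 0 ≤ κN r s) (hκNle : ∀ r s, κN r s ≤ N)
    (h' h : S → ℕ) (hne : h' ≠ 0) (hle : ∀ s, h' s ≤ h s) :
    pN κN N h' *
        ∏ r : S, (1 - Real.exp (-(∑ s : S, κN r s * (h' s : ℝ)) / N)) ^ (h r - h' r)
      ≤ pN κN N h :=
  connProb_monotone_estimate_general N κN hκNsym hκN0 h' h hle

end
end

section
/- For every kernel κ on S and every k ∈ ℕ₀^S, ∑_{r,s∈S} κ(r,s) ∑_{m,m̃∈ℕ₀^S : m + m̃ = k} (∏_{u∈S} k_u!/(m_u! · m̃_u!)) · τ(m;κ) m_r · τ(m̃;κ) m̃_s = 2(|k| − 1) · τ(k;κ). -/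
open scoped Classical ENNReal
open Filter MeasureTheory

noncomputable section

/-!
Mark an edge `{i, j}` of a spanning tree on the `|k|` typed vertices and orient it from `i` to `j`;
a tree has `2 (|k| - 1)` oriented edges. Deleting the edge leaves a spanning tree of the
component `A` of `i` and one of its complement, and conversely any two such trees joined by an
edge from `A` to `Aᶜ` form a spanning tree. Grouping the sets `A` by their type composition `m`
(there are `∏ᵤ binom(k_u, m_u)` of them, and the trees on `A` weigh `τ(m)` after relabelling)
gives the left-hand side.
-/

theorem SimpleGraph.card_le_card_edgeSet_add_one_of_reachable {V : Type*} [Finite V]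
    {G : SimpleGraph V} {A : Finset V} (h : ∀ a ∈ A, ∀ b ∈ A, G.Reachable a b) :
    A.card ≤ Nat.card G.edgeSet + 1 := by
  rcases A.eq_empty_or_nonempty with rfl | ⟨a, ha⟩
  · simp
  set C := G.connectedComponentMk a
  have hAC : A.card ≤ Nat.card C.supp := by
    rw [Nat.card_coe_set_eq, ← Set.ncard_coe_finset]
    exact Set.ncard_le_ncard (fun b hb => (SimpleGraph.ConnectedComponent.sound (h a ha b hb)).symm)
  have hC := C.connected_toSimpleGraph.card_vert_le_card_edgeSet_add_one
  have hE : Nat.card C.toSimpleGraph.edgeSet ≤ Nat.card G.edgeSet :=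
    Nat.card_le_card_of_injective _ (SimpleGraph.Embedding.induce C.supp).mapEdgeSet.injective
  have : Nat.card C = Nat.card C.supp := rfl
  omega

namespace SpanningTree

open Finset

variable {n : ℕ}

def sortedPair (i j : Fin n) : Fin n × Fin n := (min i j, max i j)

lemma sortedPair_comm (i j : Fin n) : sortedPair i j = sortedPair j i := by
  simp [sortedPair, min_comm, max_comm]

lemma sortedPair_eq_or (i j : Fin n) : sortedPair i j = (i, j) ∨ sortedPair i j = (j, i) := by
  rcases le_total i j with h | h <;> simp [sortedPair, h]

lemma mem_upperPairs {q : Fin n × Fin n} : q ∈ upperPairs n ↔ q.1 < q.2 := by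
  simp [upperPairs]

lemma sortedPair_mem_upperPairs {i j : Fin n} (h : i ≠ j) : sortedPair i j ∈ upperPairs n := by
  rcases h.lt_or_gt with h | h <;> simp [sortedPair, mem_upperPairs, h, h.le]

lemma sortedPair_of_mem_upperPairs {q : Fin n × Fin n} (hq : q ∈ upperPairs n) :
    sortedPair q.1 q.2 = q := by
  simp [sortedPair, (mem_upperPairs.1 hq).le]

lemma sortedPair_eq_sortedPair_iff {a b c d : Fin n} :
    sortedPair a b = sortedPair c d ↔ (a = c ∧ b = d) ∨ (a = d ∧ b = c) := by
  constructor
  · intro h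
    rcases sortedPair_eq_or a b with h₁ | h₁ <;> rcases sortedPair_eq_or c d with h₂ | h₂ <;>
      · rw [h₁, h₂, Prod.ext_iff] at h; simp only at h; tauto
  · rintro (⟨rfl, rfl⟩ | ⟨rfl, rfl⟩)
    · rfl
    · exact sortedPair_comm _ _

lemma graphOf_adj {u v : Fin n} :
    (graphOf E).Adj u v ↔ u ≠ v ∧ ((u, v) ∈ E ∨ (v, u) ∈ E) := by
  simp [graphOf, SimpleGraph.fromRel_adj]

lemma graphOf_adj_of_sortedPair_mem {u v : Fin n} (huv : u ≠ v)
    (h : sortedPair u v ∈ E) : (graphOf E).Adj u v := by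
  rcases sortedPair_eq_or u v with h' | h' <;> rw [h'] at h <;> simp [graphOf_adj, huv, h]

lemma graphOf_adj_iff (hE : E ⊆ upperPairs n) {u v : Fin n} :
    (graphOf E).Adj u v ↔ u ≠ v ∧ sortedPair u v ∈ E := by
  refine ⟨fun h => ⟨h.ne, ?_⟩, fun h => graphOf_adj_of_sortedPair_mem h.1 h.2⟩
  rcases (graphOf_adj.1 h).2 with h' | h'
  · rwa [← sortedPair_of_mem_upperPairs (hE h')] at h'
  · rwa [← sortedPair_of_mem_upperPairs (hE h'), sortedPair_comm] at h'

lemma graphOf_mono {E F : Finset (Fin n × Fin n)} (h : E ⊆ F) : graphOf E ≤ graphOf F :=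
  fun _ _ huv => graphOf_adj.2 ⟨(graphOf_adj.1 huv).1, (graphOf_adj.1 huv).2.imp (@h _) (@h _)⟩

lemma card_edgeSet_graphOf_le (E : Finset (Fin n × Fin n)) :
    Nat.card (graphOf E).edgeSet ≤ E.card := by
  have hsub : (graphOf E).edgeSet ⊆ ↑(E.image fun q => s(q.1, q.2)) := by
    rintro ⟨u, v⟩ huv
    rcases (graphOf_adj.1 huv).2 with h | h
    · exact mem_image.2 ⟨_, h, rfl⟩
    · exact mem_image.2 ⟨_, h, Sym2.eq_swap⟩
  rw [Nat.card_coe_set_eq]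
  exact (Set.ncard_le_ncard hsub (finite_toSet _)).trans
    ((Set.ncard_coe_finset _).trans_le card_image_le)

def IsAdjClosed (E : Finset (Fin n × Fin n)) (A : Finset (Fin n)) : Prop :=
  ∀ a b, (graphOf E).Adj a b → a ∈ A → b ∈ A

lemma IsAdjClosed.mem_of_reachable
    (hA : IsAdjClosed E A) {u v : Fin n} (hu : u ∈ A) (h : (graphOf E).Reachable u v) : v ∈ A := by
  obtain ⟨p⟩ := h
  induction p with
  | nil => exact hu
  | cons hab _ ih => exact ih (hA _ _ hab hu)

lemma IsAdjClosed.compl (hA : IsAdjClosed E A) : IsAdjClosed E Aᶜ := fun a b hab ha =>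
  mem_compl.2 fun hb => mem_compl.1 ha (hA b a hab.symm hb)

def edgesFrom (E : Finset (Fin n × Fin n)) (A : Finset (Fin n)) : Finset (Fin n × Fin n) :=
  E.filter fun q => q.1 ∈ A

lemma edgesFrom_union_edgesFrom_compl (E : Finset (Fin n × Fin n)) (A : Finset (Fin n)) :
    edgesFrom E A ∪ edgesFrom E Aᶜ = E := by
  ext q
  simp only [edgesFrom, mem_union, mem_filter, mem_compl]
  tauto

lemma card_edgesFrom_add_card_edgesFrom_compl (E : Finset (Fin n × Fin n)) (A : Finset (Fin n)) :
    (edgesFrom E A).card + (edgesFrom E Aᶜ).card = E.card := by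
  simpa [edgesFrom] using card_filter_add_card_filter_not (s := E) (fun q => q.1 ∈ A)

lemma IsAdjClosed.reachable_edgesFrom (hA : IsAdjClosed E A) {u v : Fin n} (hu : u ∈ A)
    (h : (graphOf E).Reachable u v) : (graphOf (edgesFrom E A)).Reachable u v := by
  obtain ⟨p⟩ := h
  induction p with
  | nil => rfl
  | cons hab _ ih =>
    have hb := hA _ _ hab hu
    refine (SimpleGraph.Adj.reachable ?_).trans (ih hb)
    obtain ⟨hne, h | h⟩ := graphOf_adj.1 hab
    · exact graphOf_adj.2 ⟨hne, Or.inl (mem_filter.2 ⟨h, hu⟩)⟩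
    · exact graphOf_adj.2 ⟨hne, Or.inr (mem_filter.2 ⟨h, hb⟩)⟩

def within (A : Finset (Fin n)) : Finset (Fin n × Fin n) :=
  (upperPairs n).filter fun q => q.1 ∈ A ∧ q.2 ∈ A

lemma mem_within {q : Fin n × Fin n} :
    q ∈ within A ↔ q ∈ upperPairs n ∧ q.1 ∈ A ∧ q.2 ∈ A :=
  mem_filter

lemma IsAdjClosed.edgesFrom_subset_within (hA : IsAdjClosed E A) (hE : E ⊆ upperPairs n) :
    edgesFrom E A ⊆ within A := fun q hq => by
  obtain ⟨hqE, hq⟩ := mem_filter.1 hq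
  have hadj := graphOf_adj.2 ⟨(mem_upperPairs.1 (hE hqE)).ne, Or.inl hqE⟩
  exact mem_within.2 ⟨hE hqE, hq, hA _ _ hadj hq⟩

def IsTreeOn (A : Finset (Fin n)) (D : Finset (Fin n × Fin n)) : Prop :=
  D ⊆ within A ∧ (∀ a ∈ A, ∀ b ∈ A, (graphOf D).Reachable a b) ∧ D.card + 1 = A.card

def IsSpanningTree (E : Finset (Fin n × Fin n)) : Prop :=
  E ⊆ upperPairs n ∧ (graphOf E).Connected ∧ E.card + 1 = n

lemma isTreeOn_univ_iff {D : Finset (Fin n × Fin n)} :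
    IsTreeOn univ D ↔ IsSpanningTree D := by
  have hwithin : within (univ : Finset (Fin n)) = upperPairs n := by
    ext q; simp [mem_within]
  rw [IsTreeOn, IsSpanningTree, hwithin, card_univ, Fintype.card_fin]
  refine and_congr_right fun _ => ⟨fun ⟨hr, hc⟩ => ⟨?_, hc⟩, fun ⟨hc, hcard⟩ => ?_⟩
  · have : Nonempty (Fin n) := Fin.pos_iff_nonempty.1 (by omega)
    exact ⟨fun a b => hr a (mem_univ a) b (mem_univ b)⟩
  · exact ⟨fun a _ b _ => hc.preconnected a b, hcard⟩

lemma isTreeOn_pair_of_partition {F : Finset (Fin n × Fin n)} (hF : F ⊆ upperPairs n)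
    (hcard : F.card + 2 = n) (hA : IsAdjClosed F A)
    (hAr : ∀ a ∈ A, ∀ b ∈ A, (graphOf F).Reachable a b)
    (hAcr : ∀ a ∈ Aᶜ, ∀ b ∈ Aᶜ, (graphOf F).Reachable a b) :
    IsTreeOn A (edgesFrom F A) ∧ IsTreeOn Aᶜ (edgesFrom F Aᶜ) := by
  have hAc := hA.compl
  have hr₁ : ∀ a ∈ A, ∀ b ∈ A, (graphOf (edgesFrom F A)).Reachable a b :=
    fun a ha b hb => hA.reachable_edgesFrom ha (hAr a ha b hb)
  have hr₂ : ∀ a ∈ Aᶜ, ∀ b ∈ Aᶜ, (graphOf (edgesFrom F Aᶜ)).Reachable a b :=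
    fun a ha b hb => hAc.reachable_edgesFrom ha (hAcr a ha b hb)
  have h₁ := (SimpleGraph.card_le_card_edgeSet_add_one_of_reachable hr₁).trans
    (Nat.add_le_add_right (card_edgeSet_graphOf_le _) 1)
  have h₂ := (SimpleGraph.card_le_card_edgeSet_add_one_of_reachable hr₂).trans
    (Nat.add_le_add_right (card_edgeSet_graphOf_le _) 1)
  have hsum := card_edgesFrom_add_card_edgesFrom_compl F A
  have htot : A.card + Aᶜ.card = n := by rw [card_add_card_compl, Fintype.card_fin]
  exact ⟨⟨hA.edgesFrom_subset_within hF, hr₁, by omega⟩,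
    ⟨hAc.edgesFrom_subset_within hF, hr₂, by omega⟩⟩

variable {i j : Fin n}

lemma mem_of_sortedPair_mem_within (h : sortedPair i j ∈ within A) :
    i ∈ A ∧ j ∈ A := by
  rcases sortedPair_eq_or i j with h' | h' <;> rw [h', mem_within] at h <;> tauto

/-- What is left of a spanning tree after deleting its edge `{i, j}`: the component `t.1` of `i`
and the edge sets of the trees on `t.1` and on its complement. -/
def IsSplit (i j : Fin n)
    (t : Finset (Fin n) × Finset (Fin n × Fin n) × Finset (Fin n × Fin n)) : Prop :=
  i ∈ t.1 ∧ j ∉ t.1 ∧ IsTreeOn t.1 t.2.1 ∧ IsTreeOn t.1ᶜ t.2.2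

def glue (i j : Fin n) (t : Finset (Fin n) × Finset (Fin n × Fin n) × Finset (Fin n × Fin n)) :
    Finset (Fin n × Fin n) :=
  insert (sortedPair i j) (t.2.1 ∪ t.2.2)

def reachSet (E : Finset (Fin n × Fin n)) (i : Fin n) : Finset (Fin n) :=
  univ.filter ((graphOf E).Reachable i)

def cut (i j : Fin n) (E : Finset (Fin n × Fin n)) :
    Finset (Fin n) × Finset (Fin n × Fin n) × Finset (Fin n × Fin n) :=
  let F := E.erase (sortedPair i j)
  (reachSet F i, edgesFrom F (reachSet F i), edgesFrom F (reachSet F i)ᶜ)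

namespace IsSplit

variable {t : Finset (Fin n) × Finset (Fin n × Fin n) × Finset (Fin n × Fin n)}

lemma ne (h : IsSplit i j t) : i ≠ j := fun hij => h.2.1 (hij ▸ h.1)

lemma sortedPair_notMem (h : IsSplit i j t) : sortedPair i j ∉ t.2.1 ∪ t.2.2 := by
  rw [mem_union]
  rintro (he | he)
  · exact h.2.1 (mem_of_sortedPair_mem_within (h.2.2.1.1 he)).2
  · exact mem_compl.1 (mem_of_sortedPair_mem_within (h.2.2.2.1 he)).1 h.1

lemma disjoint (h : IsSplit i j t) : Disjoint t.2.1 t.2.2 :=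
  disjoint_left.2 fun _ h₁ h₂ =>
    mem_compl.1 (mem_within.1 (h.2.2.2.1 h₂)).2.1 (mem_within.1 (h.2.2.1.1 h₁)).2.1

lemma mem_iff_of_mem_union (h : IsSplit i j t) {q : Fin n × Fin n} (hq : q ∈ t.2.1 ∪ t.2.2) :
    (q.1 ∈ t.1 ↔ q.2 ∈ t.1) := by
  rcases mem_union.1 hq with hq | hq
  · have := mem_within.1 (h.2.2.1.1 hq); tauto
  · have := mem_within.1 (h.2.2.2.1 hq); simp only [mem_compl] at this; tauto

lemma isAdjClosed (h : IsSplit i j t) : IsAdjClosed (t.2.1 ∪ t.2.2) t.1 := by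
  intro a b hab ha
  rcases (graphOf_adj.1 hab).2 with hq | hq
  · exact (h.mem_iff_of_mem_union hq).1 ha
  · exact (h.mem_iff_of_mem_union hq).2 ha

lemma isSpanningTree_glue (h : IsSplit i j t) : IsSpanningTree (glue i j t) := by
  obtain ⟨A, D₁, D₂⟩ := t
  have ⟨hi, hj, h₁, h₂⟩ := h
  have hle₁ : graphOf D₁ ≤ graphOf (glue i j (A, D₁, D₂)) :=
    graphOf_mono (subset_union_left.trans (subset_insert _ _))
  have hle₂ : graphOf D₂ ≤ graphOf (glue i j (A, D₁, D₂)) :=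
    graphOf_mono (subset_union_right.trans (subset_insert _ _))
  have hji : (graphOf (glue i j (A, D₁, D₂))).Adj j i :=
    graphOf_adj_of_sortedPair_mem (h.ne.symm) (by rw [sortedPair_comm]; exact mem_insert_self _ _)
  have hreach : ∀ v, (graphOf (glue i j (A, D₁, D₂))).Reachable v i := by
    intro v
    by_cases hv : v ∈ A
    · exact (h₁.2.1 v hv i hi).mono hle₁
    · exact ((h₂.2.1 v (mem_compl.2 hv) j (mem_compl.2 hj)).mono hle₂).trans hji.reachable
  have : Nonempty (Fin n) := ⟨i⟩
  refine ⟨?_, ⟨fun u v => (hreach u).trans (hreach v).symm⟩, ?_⟩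
  · refine insert_subset (sortedPair_mem_upperPairs h.ne) (union_subset ?_ ?_)
    · exact fun q hq => (mem_within.1 (h₁.1 hq)).1
    · exact fun q hq => (mem_within.1 (h₂.1 hq)).1
  · rw [glue, card_insert_of_notMem h.sortedPair_notMem, card_union_of_disjoint h.disjoint]
    have hA : A.card + Aᶜ.card = n := by rw [card_add_card_compl, Fintype.card_fin]
    have hD₁ : D₁.card + 1 = A.card := h₁.2.2
    have hD₂ : D₂.card + 1 = Aᶜ.card := h₂.2.2
    dsimp only
    omega

lemma cut_glue (h : IsSplit i j t) : cut i j (glue i j t) = t := by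
  obtain ⟨A, D₁, D₂⟩ := t
  have hreach : reachSet (D₁ ∪ D₂) i = A := by
    ext v
    simp only [reachSet, mem_filter, mem_univ, true_and]
    exact ⟨h.isAdjClosed.mem_of_reachable h.1,
      fun hv => (h.2.2.1.2.1 i h.1 v hv).mono (graphOf_mono subset_union_left)⟩
  have hD₁ : edgesFrom (D₁ ∪ D₂) A = D₁ := by
    ext q
    simp only [edgesFrom, mem_filter, mem_union]
    constructor
    · rintro ⟨hq | hq, hqA⟩
      · exact hq
      · exact absurd hqA (mem_compl.1 (mem_within.1 (h.2.2.2.1 hq)).2.1)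
    · exact fun hq => ⟨Or.inl hq, (mem_within.1 (h.2.2.1.1 hq)).2.1⟩
  have hD₂ : edgesFrom (D₁ ∪ D₂) Aᶜ = D₂ := by
    ext q
    simp only [edgesFrom, mem_filter, mem_union]
    constructor
    · rintro ⟨hq | hq, hqA⟩
      · exact absurd (mem_within.1 (h.2.2.1.1 hq)).2.1 (mem_compl.1 hqA)
      · exact hq
    · exact fun hq => ⟨Or.inr hq, (mem_within.1 (h.2.2.2.1 hq)).2.1⟩
  simp only [cut, glue, erase_insert h.sortedPair_notMem, hreach, hD₁, hD₂]

end IsSplit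

lemma glue_cut (he : sortedPair i j ∈ E) :
    glue i j (cut i j E) = E := by
  simp only [glue, cut, edgesFrom_union_edgesFrom_compl, insert_erase he]

lemma IsSpanningTree.isSplit_cut (hE : IsSpanningTree E)
    (hij : i ≠ j) (he : sortedPair i j ∈ E) : IsSplit i j (cut i j E) := by
  set F := E.erase (sortedPair i j)
  set A := reachSet F i
  have hF : F ⊆ upperPairs n := (erase_subset _ _).trans hE.1
  have hFcard : F.card + 2 = n := by rw [card_erase_of_mem he]; have := hE.2.2; omega
  have hmemA : ∀ v, v ∈ A ↔ (graphOf F).Reachable i v := by simp [A, reachSet]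
  have hA : IsAdjClosed F A := fun a b hab ha =>
    (hmemA b).2 (((hmemA a).1 ha).trans hab.reachable)
  have hcover : ∀ v, v ∉ A → (graphOf F).Reachable j v := by
    -- The only edge of `E` missing from `F` joins `i ∈ A` to `j`.
    have hB : IsAdjClosed E (A ∪ reachSet F j) := by
      intro a b hab ha
      obtain ⟨hne, hab⟩ := (graphOf_adj_iff hE.1).1 hab
      by_cases hsp : sortedPair a b = sortedPair i j
      · rcases sortedPair_eq_sortedPair_iff.1 hsp with ⟨-, rfl⟩ | ⟨-, rfl⟩
        · simp [reachSet]
        · simp [A, reachSet]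
      · have hadj : (graphOf F).Adj a b :=
          graphOf_adj_of_sortedPair_mem hne (mem_erase.2 ⟨hsp, hab⟩)
        rcases mem_union.1 ha with ha | ha
        · exact mem_union_left _ (hA a b hadj ha)
        · simp only [reachSet, mem_filter, mem_univ, true_and] at ha
          exact mem_union_right _ (by simpa [reachSet] using ha.trans hadj.reachable)
    intro v hv
    have := hB.mem_of_reachable (mem_union_left _ ((hmemA i).2 .rfl)) (hE.2.1.preconnected i v)
    simpa [reachSet, hv] using this
  have hj : j ∉ A := by
    intro hj
    have hall : ∀ a ∈ (univ : Finset (Fin n)), ∀ b ∈ univ, (graphOf F).Reachable a b := by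
      have hi : ∀ v, (graphOf F).Reachable i v := fun v => by
        by_cases hv : v ∈ A
        · exact (hmemA v).1 hv
        · exact ((hmemA j).1 hj).trans (hcover v hv)
      exact fun a _ b _ => (hi a).symm.trans (hi b)
    have := (SimpleGraph.card_le_card_edgeSet_add_one_of_reachable hall).trans
      (Nat.add_le_add_right (card_edgeSet_graphOf_le F) 1)
    rw [card_univ, Fintype.card_fin] at this
    omega
  have hAr : ∀ a ∈ A, ∀ b ∈ A, (graphOf F).Reachable a b := fun a ha b hb =>
    ((hmemA a).1 ha).symm.trans ((hmemA b).1 hb)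
  have hAcr : ∀ a ∈ Aᶜ, ∀ b ∈ Aᶜ, (graphOf F).Reachable a b := fun a ha b hb =>
    (hcover a (mem_compl.1 ha)).symm.trans (hcover b (mem_compl.1 hb))
  exact ⟨(hmemA i).2 .rfl, hj, isTreeOn_pair_of_partition hF hFcard hA hAr hAcr⟩

lemma card_filter_sortedPair_mem (hE : E ⊆ upperPairs n) :
    (univ.filter fun p : Fin n × Fin n => p.1 ≠ p.2 ∧ sortedPair p.1 p.2 ∈ E).card
      = 2 * E.card := by
  rw [card_eq_sum_card_fiberwise (f := fun p => sortedPair p.1 p.2) (t := E)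
    fun p hp => (mem_filter.1 hp).2.2, mul_comm, ← smul_eq_mul, ← sum_const]
  refine sum_congr rfl fun q hq => ?_
  have hq' := sortedPair_of_mem_upperPairs (hE hq)
  have hfiber : (univ.filter fun p : Fin n × Fin n => p.1 ≠ p.2 ∧ sortedPair p.1 p.2 ∈ E).filter
      (fun p => sortedPair p.1 p.2 = q) = {q, q.swap} := by
    ext p
    simp only [mem_filter, mem_univ, true_and, mem_insert, mem_singleton]
    constructor
    · rintro ⟨-, hp⟩
      rw [← hq', sortedPair_eq_sortedPair_iff] at hp
      rcases hp with ⟨h₁, h₂⟩ | ⟨h₁, h₂⟩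
      · exact Or.inl (Prod.ext h₁ h₂)
      · exact Or.inr (Prod.ext h₁ h₂)
    · rintro (rfl | rfl)
      · exact ⟨⟨(mem_upperPairs.1 (hE hq)).ne, by rw [hq']; exact hq⟩, hq'⟩
      · rw [Prod.fst_swap, Prod.snd_swap, sortedPair_comm, hq']
        exact ⟨⟨(mem_upperPairs.1 (hE hq)).ne', hq⟩, rfl⟩
  rw [hfiber, card_pair]
  exact fun h => (mem_upperPairs.1 (hE hq)).ne (congrArg Prod.fst h)

variable {S : Type*}

def edgeWeight (κ : S → S → ℝ) (x : Fin n → S) (D : Finset (Fin n × Fin n)) : ℝ :=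
  ∏ q ∈ D, κ (x q.1) (x q.2)

def treeWeightOn (κ : S → S → ℝ) (x : Fin n → S) (A : Finset (Fin n)) : ℝ :=
  ∑ D ∈ univ.filter (IsTreeOn A), edgeWeight κ x D

lemma treeWeight_eq_sum_isSpanningTree (κ : S → S → ℝ) (x : Fin n → S) :
    treeWeight n x κ = ∑ E ∈ univ.filter IsSpanningTree, edgeWeight κ x E := by
  rw [treeWeight]
  congr 1
  ext E
  simp [IsSpanningTree]

lemma IsSplit.edgeWeight_glue {κ : S → S → ℝ} (hκ : ∀ r s, κ r s = κ s r) (x : Fin n → S)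
    {t : Finset (Fin n) × Finset (Fin n × Fin n) × Finset (Fin n × Fin n)} (h : IsSplit i j t) :
    edgeWeight κ x (glue i j t)
      = κ (x i) (x j) * (edgeWeight κ x t.2.1 * edgeWeight κ x t.2.2) := by
  have hκij : κ (x (sortedPair i j).1) (x (sortedPair i j).2) = κ (x i) (x j) := by
    rcases sortedPair_eq_or i j with h' | h' <;> rw [h']
    exact hκ _ _
  rw [edgeWeight, edgeWeight, edgeWeight, glue, prod_insert h.sortedPair_notMem,
    prod_union h.disjoint, hκij]

lemma sum_isSplit (κ : S → S → ℝ) (x : Fin n → S) (i j : Fin n) :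
    ∑ t ∈ univ.filter (IsSplit i j), edgeWeight κ x t.2.1 * edgeWeight κ x t.2.2
      = ∑ A ∈ univ.filter (fun A => i ∈ A ∧ j ∉ A),
          treeWeightOn κ x A * treeWeightOn κ x Aᶜ := by
  simp_rw [treeWeightOn, sum_mul_sum, ← sum_product']
  refine sum_finset_product _ _ _ fun t => ?_
  simp [IsSplit, and_assoc]

lemma sum_isSpanningTree_sortedPair_mem {κ : S → S → ℝ} (hκ : ∀ r s, κ r s = κ s r)
    (x : Fin n → S) (hij : i ≠ j) :
    ∑ E ∈ univ.filter (fun E => IsSpanningTree E ∧ sortedPair i j ∈ E), edgeWeight κ x E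
      = κ (x i) (x j) * ∑ A ∈ univ.filter (fun A => i ∈ A ∧ j ∉ A),
          treeWeightOn κ x A * treeWeightOn κ x Aᶜ := by
  rw [← sum_isSplit, mul_sum]
  refine sum_nbij' (cut i j) (glue i j) ?_ ?_ ?_ ?_ ?_
  · intro E hE
    simp only [mem_filter, mem_univ, true_and] at hE ⊢
    exact hE.1.isSplit_cut hij hE.2
  · intro t ht
    simp only [mem_filter, mem_univ, true_and] at ht ⊢
    exact ⟨ht.isSpanningTree_glue, mem_insert_self _ _⟩
  · intro E hE
    exact glue_cut (mem_filter.1 hE).2.2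
  · intro t ht
    exact (mem_filter.1 ht).2.cut_glue
  · intro E hE
    obtain ⟨hE, he⟩ := (mem_filter.1 hE).2
    rw [← (hE.isSplit_cut hij he).edgeWeight_glue hκ x, glue_cut he]

lemma two_mul_treeWeight {κ : S → S → ℝ} (hκ : ∀ r s, κ r s = κ s r) (x : Fin n → S) :
    2 * ((n : ℝ) - 1) * treeWeight n x κ
      = ∑ A : Finset (Fin n), (∑ i ∈ A, ∑ j ∈ Aᶜ, κ (x i) (x j)) *
          (treeWeightOn κ x A * treeWeightOn κ x Aᶜ) := by
  calc 2 * ((n : ℝ) - 1) * treeWeight n x κ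
      = ∑ E ∈ univ.filter IsSpanningTree,
          ∑ p ∈ univ.filter (fun p : Fin n × Fin n => p.1 ≠ p.2 ∧ sortedPair p.1 p.2 ∈ E),
            edgeWeight κ x E := by
        rw [treeWeight_eq_sum_isSpanningTree, mul_sum]
        refine sum_congr rfl fun E hE => ?_
        obtain ⟨hsub, -, hcard⟩ := (mem_filter.1 hE).2
        have hcard' : (n : ℝ) - 1 = E.card := by
          rw [sub_eq_iff_eq_add]; exact_mod_cast hcard.symm
        rw [sum_const, card_filter_sortedPair_mem hsub, nsmul_eq_mul, hcard']
        push_cast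
        ring
    _ = ∑ p ∈ univ.filter (fun p : Fin n × Fin n => p.1 ≠ p.2),
          ∑ E ∈ univ.filter (fun E => IsSpanningTree E ∧ sortedPair p.1 p.2 ∈ E),
            edgeWeight κ x E := by
        refine sum_comm' fun E p => ?_
        simp only [mem_filter, mem_univ, true_and]
        tauto
    _ = ∑ p ∈ univ.filter (fun p : Fin n × Fin n => p.1 ≠ p.2),
          ∑ A ∈ univ.filter (fun A => p.1 ∈ A ∧ p.2 ∉ A),
            κ (x p.1) (x p.2) * (treeWeightOn κ x A * treeWeightOn κ x Aᶜ) := by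
        refine sum_congr rfl fun p hp => ?_
        rw [sum_isSpanningTree_sortedPair_mem hκ x (mem_filter.1 hp).2, mul_sum]
    _ = _ := by
        simp_rw [← sum_product', sum_mul]
        refine sum_comm' fun p A => ?_
        simp only [mem_filter, mem_univ, true_and, mem_product, mem_compl, and_true]
        exact ⟨fun h => h.2, fun h => ⟨fun he => h.2 (he ▸ h.1), h⟩⟩

def composition (x : Fin n → S) (A : Finset (Fin n)) : S → ℕ :=
  fun u => (A.filter fun i => x i = u).card

lemma composition_le (x : Fin n → S) (A : Finset (Fin n)) :
    composition x A ≤ composition x univ :=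
  fun _ => card_le_card (filter_subset_filter _ (subset_univ A))

lemma composition_add_composition_compl (x : Fin n → S) (A : Finset (Fin n)) :
    composition x A + composition x Aᶜ = composition x univ := by
  funext u
  have hdisj : Disjoint A Aᶜ := disjoint_compl_right
  rw [Pi.add_apply, composition, composition, composition,
    ← card_union_of_disjoint (disjoint_filter_filter hdisj), ← filter_union, union_compl]

lemma sum_comp_eq_sum_composition [Fintype S] (x : Fin n → S) (f : S → ℝ) (A : Finset (Fin n)) :
    ∑ i ∈ A, f (x i) = ∑ r, (composition x A r : ℝ) * f r := by
  rw [← sum_fiberwise A x]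
  refine sum_congr rfl fun r _ => ?_
  rw [sum_congr rfl fun i hi => by rw [(mem_filter.1 hi).2], sum_const, nsmul_eq_mul]
  rfl

lemma composition_compatVec [Fintype S] (k : S → ℕ) : composition (compatVec k) univ = k := by
  have hmap : univ.val.map (compatVec k) = ∑ s, k s • ({s} : Multiset S) := by
    rw [Fin.univ_val_map, ← Multiset.coe_toList (∑ s, k s • ({s} : Multiset S))]
    congr 1
    exact List.ext_get (by simp) fun i _ _ => by simp [compatVec, compatList]; rfl
  funext u
  have := congrArg (Multiset.count u) hmap
  simp only [Multiset.count_map, Multiset.count_sum', Multiset.count_nsmul,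
    Multiset.count_singleton] at this
  simpa [composition, card_def, filter_val, eq_comm] using this

/-- A subset `A` is determined by its intersections with the fibres of `x`, which can be chosen
independently. -/
lemma card_filter_composition_eq [Fintype S] (x : Fin n → S) (m : S → ℕ) :
    (univ.filter fun A => composition x A = m).card
      = ∏ u, (composition x univ u).choose (m u) := by
  set fiber : S → Finset (Fin n) := fun u => univ.filter fun i => x i = u
  have hprod : ∏ u, (composition x univ u).choose (m u)
      = (Fintype.piFinset fun u => (fiber u).powersetCard (m u)).card := by
    simp [Fintype.card_piFinset, card_powersetCard, composition, fiber]
  have hfiber : ∀ t ∈ Fintype.piFinset (fun u => (fiber u).powersetCard (m u)),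
      ∀ u, ∀ i ∈ t u, x i = u := fun t ht u i hi =>
    (mem_filter.1 ((mem_powersetCard.1 (Fintype.mem_piFinset.1 ht u)).1 hi)).2
  have hglue : ∀ t ∈ Fintype.piFinset (fun u => (fiber u).powersetCard (m u)),
      ∀ u, (univ.filter fun i => i ∈ t (x i)).filter (fun i => x i = u) = t u := by
    intro t ht u
    ext i
    simp only [mem_filter, mem_univ, true_and]
    exact ⟨fun ⟨hi, hxi⟩ => hxi ▸ hi,
      fun hi => ⟨(hfiber t ht u i hi).symm ▸ hi, hfiber t ht u i hi⟩⟩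
  rw [hprod]
  refine card_nbij' (fun A u => A.filter fun i => x i = u)
    (fun t => univ.filter fun i => i ∈ t (x i)) ?_ ?_ ?_ ?_
  · intro A hA
    refine Fintype.mem_piFinset.2 fun u => mem_powersetCard.2 ?_
    exact ⟨filter_subset_filter _ (subset_univ A), congrFun (mem_filter.1 hA).2 u⟩
  · intro t ht
    refine mem_filter.2 ⟨mem_univ _, funext fun u => ?_⟩
    rw [composition, hglue t ht u]
    exact (mem_powersetCard.1 (Fintype.mem_piFinset.1 ht u)).2
  · intro A _
    ext i
    simp
  · intro t ht
    exact funext (hglue t ht)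

variable {N : ℕ}

def mapEdges (f : Fin N → Fin n) (D : Finset (Fin N × Fin N)) : Finset (Fin n × Fin n) :=
  D.image fun q => sortedPair (f q.1) (f q.2)

lemma injOn_sortedPair_comp {f : Fin N → Fin n} {C : Finset (Fin N)} (hf : Set.InjOn f C) :
    Set.InjOn (fun q : Fin N × Fin N => sortedPair (f q.1) (f q.2)) (within C) := by
  intro q hq q' hq' h
  obtain ⟨hq, h₁, h₂⟩ := mem_within.1 hq
  obtain ⟨hq', h₁', h₂'⟩ := mem_within.1 hq'
  rcases sortedPair_eq_sortedPair_iff.1 h with ⟨ha, hb⟩ | ⟨ha, hb⟩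
  · exact Prod.ext (hf h₁ h₁' ha) (hf h₂ h₂' hb)
  · have hlt := mem_upperPairs.1 hq
    rw [hf h₁ h₂' ha, hf h₂ h₁' hb] at hlt
    exact absurd (mem_upperPairs.1 hq') hlt.not_gt

lemma IsTreeOn.mapEdges {f : Fin N → Fin n} {C : Finset (Fin N)} (hf : Set.InjOn f C)
    {D : Finset (Fin N × Fin N)} (hD : IsTreeOn C D) : IsTreeOn (C.image f) (mapEdges f D) := by
  have hne : ∀ {u v}, u ∈ C → v ∈ C → u ≠ v → f u ≠ f v := fun hu hv huv h => huv (hf hu hv h)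
  refine ⟨?_, ?_, ?_⟩
  · intro _ hfq
    obtain ⟨q, hq, rfl⟩ := mem_image.1 hfq
    obtain ⟨hq, h₁, h₂⟩ := mem_within.1 (hD.1 hq)
    refine mem_within.2 ⟨sortedPair_mem_upperPairs (hne h₁ h₂ (mem_upperPairs.1 hq).ne), ?_⟩
    rcases sortedPair_eq_or (f q.1) (f q.2) with h | h <;> rw [h] <;>
      exact ⟨mem_image_of_mem f (by assumption), mem_image_of_mem f (by assumption)⟩
  · have hadj : ∀ {u v}, (graphOf D).Adj u v →
        (graphOf (SpanningTree.mapEdges f D)).Adj (f u) (f v) := fun {u v} huv => by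
      obtain ⟨huv, h | h⟩ := graphOf_adj.1 huv
      · obtain ⟨-, hu, hv⟩ := mem_within.1 (hD.1 h)
        exact graphOf_adj_of_sortedPair_mem (hne hu hv huv) (mem_image_of_mem _ h)
      · obtain ⟨-, hv, hu⟩ := mem_within.1 (hD.1 h)
        refine graphOf_adj_of_sortedPair_mem (hne hu hv huv) ?_
        rw [sortedPair_comm]
        exact mem_image_of_mem _ h
    intro _ hfa _ hfb
    obtain ⟨a, ha, rfl⟩ := mem_image.1 hfa
    obtain ⟨b, hb, rfl⟩ := mem_image.1 hfb
    exact (hD.2.1 a ha b hb).map (⟨f, hadj⟩ : graphOf D →g _)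
  · rw [_root_.SpanningTree.mapEdges, card_image_of_injOn ((injOn_sortedPair_comp hf).mono hD.1),
      card_image_of_injOn hf, hD.2.2]

lemma mapEdges_mapEdges {f : Fin N → Fin n} {g : Fin n → Fin N} {C : Finset (Fin N)}
    (hgf : ∀ a ∈ C, g (f a) = a) {D : Finset (Fin N × Fin N)} (hD : D ⊆ within C) :
    mapEdges g (mapEdges f D) = D := by
  rw [mapEdges, mapEdges, image_image]
  refine (image_congr fun q hq => ?_).trans image_id
  obtain ⟨hq, h₁, h₂⟩ := mem_within.1 (hD hq)
  rcases sortedPair_eq_or (f q.1) (f q.2) with h | h <;>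
    simp only [Function.comp, h, hgf _ h₁, hgf _ h₂, id, sortedPair_of_mem_upperPairs hq]
  rw [sortedPair_comm, sortedPair_of_mem_upperPairs hq]

lemma edgeWeight_mapEdges {κ : S → S → ℝ} (hκ : ∀ r s, κ r s = κ s r) (x : Fin n → S)
    {f : Fin N → Fin n} {C : Finset (Fin N)} (hf : Set.InjOn f C) {D : Finset (Fin N × Fin N)}
    (hD : D ⊆ within C) : edgeWeight κ x (mapEdges f D) = edgeWeight κ (x ∘ f) D := by
  rw [edgeWeight, mapEdges, prod_image ((injOn_sortedPair_comp hf).mono hD)]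
  refine prod_congr rfl fun q _ => ?_
  rcases sortedPair_eq_or (f q.1) (f q.2) with h | h <;> rw [h]
  · rfl
  · exact hκ _ _

lemma treeWeightOn_empty (κ : S → S → ℝ) (x : Fin n → S) : treeWeightOn κ x ∅ = 0 :=
  sum_eq_zero fun D hD => absurd (mem_filter.1 hD).2.2.2 (by simp)

lemma treeWeightOn_image {κ : S → S → ℝ} (hκ : ∀ r s, κ r s = κ s r) (x : Fin n → S)
    {f : Fin N → Fin n} {C : Finset (Fin N)} (hf : Set.InjOn f C) :
    treeWeightOn κ x (C.image f) = treeWeightOn κ (x ∘ f) C := by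
  rcases C.eq_empty_or_nonempty with rfl | ⟨a, -⟩
  · rw [image_empty, treeWeightOn_empty, treeWeightOn_empty]
  have : Nonempty (Fin N) := ⟨a⟩
  set g := Function.invFunOn f (C : Set (Fin N))
  have hgf : ∀ a ∈ C, g (f a) = a := fun a ha => hf.leftInvOn_invFunOn ha
  have hfg : ∀ b ∈ C.image f, f (g b) = b := by
    intro _ hb
    obtain ⟨a, ha, rfl⟩ := mem_image.1 hb
    rw [hgf a ha]
  have hg : Set.InjOn g (C.image f) := fun b hb b' hb' h => by
    rw [← hfg b hb, ← hfg b' hb', h]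
  have hgC : (C.image f).image g = C := by
    rw [image_image]
    exact (image_congr fun a ha => hgf a ha).trans image_id
  refine sum_nbij' (mapEdges g) (mapEdges f) ?_ ?_ ?_ ?_ ?_
  · intro D hD
    simpa [hgC] using (mem_filter.1 hD).2.mapEdges hg
  · intro D hD
    simpa using (mem_filter.1 hD).2.mapEdges hf
  · intro D hD
    exact mapEdges_mapEdges hfg (mem_filter.1 hD).2.1
  · intro D hD
    exact mapEdges_mapEdges hgf (mem_filter.1 hD).2.1
  · intro D hD
    have hD := (mem_filter.1 hD).2
    conv_lhs => rw [← mapEdges_mapEdges hfg hD.1]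
    rw [edgeWeight_mapEdges hκ x hf (hgC ▸ hD.mapEdges hg).1]

lemma treeWeightOn_univ (κ : S → S → ℝ) (x : Fin n → S) :
    treeWeightOn κ x univ = treeWeight n x κ := by
  simp only [treeWeightOn, treeWeight_eq_sum_isSpanningTree, isTreeOn_univ_iff]

lemma card_subtype_eq_composition (x : Fin n → S) (A : Finset (Fin n)) (c : S) :
    Fintype.card {a : A // x a = c} = composition x A c := by
  rw [Fintype.card_congr (Equiv.subtypeSubtypeEquivSubtypeInter (· ∈ A) (fun i => x i = c)),
    Fintype.card_subtype, composition]
  congr 1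
  ext
  simp

/-- Any type-preserving bijection `Fin |A| ≃ A` carries the trees counted by
`τ (composition x A)` onto the trees on `A`. -/
lemma treeWeightOn_eq_tau [Fintype S] {κ : S → S → ℝ} (hκ : ∀ r s, κ r s = κ s r)
    (x : Fin n → S) (A : Finset (Fin n)) : treeWeightOn κ x A = tau κ (composition x A) := by
  set m := composition x A
  have hfiber : ∀ c, Fintype.card {i // compatVec m i = c} = Fintype.card {a : A // x a = c} := by
    intro c
    rw [card_subtype_eq_composition, Fintype.card_subtype]
    exact congrFun (composition_compatVec m) c
  let e : Fin (∑ s, m s) ≃ A := Equiv.ofFiberEquiv fun c => Fintype.equivOfCardEq (hfiber c)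
  have he : ∀ i, x (e i) = compatVec m i := Equiv.ofFiberEquiv_map (g := fun a : A => x a) _
  have hA : univ.image (fun i => (e i : Fin n)) = A := by
    ext a
    simp only [mem_image, mem_univ, true_and]
    exact ⟨fun ⟨i, hi⟩ => hi ▸ (e i).2, fun ha => ⟨e.symm ⟨a, ha⟩, by simp⟩⟩
  have hinj : Set.InjOn (fun i => (e i : Fin n)) ↑(univ : Finset (Fin (∑ s, m s))) :=
    (Subtype.val_injective.comp e.injective).injOn
  rw [tau, ← treeWeightOn_univ, ← hA, treeWeightOn_image hκ x hinj]
  exact congrArg (treeWeightOn κ · univ) (funext he)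

lemma sum_subsets_eq_sum_compositions [Fintype S] {κ : S → S → ℝ} (hκ : ∀ r s, κ r s = κ s r)
    (x : Fin n → S) {M : Finset (S → ℕ)} (hM : ∀ A, composition x A ∈ M) :
    ∑ A : Finset (Fin n), (∑ i ∈ A, ∑ j ∈ Aᶜ, κ (x i) (x j)) *
        (treeWeightOn κ x A * treeWeightOn κ x Aᶜ)
      = ∑ m ∈ M, (∏ u, ((composition x univ u).choose (m u) : ℝ)) *
          (tau κ m * tau κ (composition x univ - m) *
            ∑ r, ∑ s, κ r s * m r * (composition x univ - m) s) := by
  rw [← sum_fiberwise_of_maps_to fun A _ => hM A]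
  refine sum_congr rfl fun m _ => ?_
  rw [sum_congr rfl fun A hA => ?_, sum_const, card_filter_composition_eq, nsmul_eq_mul,
    Nat.cast_prod]
  have hA : composition x A = m := (mem_filter.1 hA).2
  have hAc : composition x Aᶜ = composition x univ - m := by
    rw [← hA, ← composition_add_composition_compl x A, add_tsub_cancel_left]
  rw [treeWeightOn_eq_tau hκ, treeWeightOn_eq_tau hκ, hA, hAc,
    sum_comp_eq_sum_composition x (fun r => ∑ j ∈ Aᶜ, κ r (x j)) A, hA]
  simp_rw [sum_comp_eq_sum_composition x _ Aᶜ, hAc, mul_sum, sum_mul]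
  refine sum_congr rfl fun r _ => sum_congr rfl fun s _ => ?_
  ring

end SpanningTree

open SpanningTree Finset in
theorem tau_recursion_general {S : Type*} [Fintype S] [DecidableEq S]
    (κ : S → S → ℝ) (hκsym : ∀ r s, κ r s = κ s r)
    (k : S → ℕ) :
    (∑ r : S, ∑ s : S, κ r s *
        ∑ m ∈ Finset.Icc 0 k,
          (∏ u : S, (Nat.factorial (k u) : ℝ) /
              ((Nat.factorial (m u) : ℝ) * (Nat.factorial (k u - m u) : ℝ))) *
            (tau κ m * (m r : ℝ)) * (tau κ (k - m) * ((k - m) s : ℝ)))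
      = 2 * (((∑ s : S, k s : ℕ) : ℝ) - 1) * tau κ k := by
  have hk : composition (compatVec k) univ = k := composition_compatVec k
  have hM : ∀ A, composition (compatVec k) A ∈ Icc 0 k := fun A =>
    mem_Icc.2 ⟨fun _ => Nat.zero_le _, (composition_le _ A).trans_eq hk⟩
  have hgroup := sum_subsets_eq_sum_compositions hκsym (compatVec k) hM
  rw [hk] at hgroup
  calc _ = ∑ m ∈ Icc 0 k, (∏ u, ((k u).choose (m u) : ℝ)) *
          (tau κ m * tau κ (k - m) * ∑ r, ∑ s, κ r s * (m r : ℝ) * ((k - m) s : ℝ)) := by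
        simp_rw [mul_sum]
        refine (sum_congr rfl fun r _ => sum_comm).trans (sum_comm.trans
          (sum_congr rfl fun m hm => sum_congr rfl fun r _ => sum_congr rfl fun s _ => ?_))
        rw [prod_congr rfl fun u _ => (Nat.cast_choose ℝ ((mem_Icc.1 hm).2 u)).symm]
        ring
    _ = 2 * (((∑ s : S, k s : ℕ) : ℝ) - 1) * tau κ k := by
        rw [← hgroup, ← two_mul_treeWeight hκsym]
        rfl

/-- the recursion for the spanning-tree weights `τ`. -/
theorem tau_recursion
    {S : Type*} [Fintype S] [DecidableEq S] [Nonempty S]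
    (κ : S → S → ℝ) (hκsym : ∀ r s, κ r s = κ s r) (hκ0 : ∀ r s, 0 ≤ κ r s)
    (k : S → ℕ) :
    (∑ r : S, ∑ s : S, κ r s *
        ∑ m ∈ Finset.Icc 0 k,
          (∏ u : S, (Nat.factorial (k u) : ℝ) /
              ((Nat.factorial (m u) : ℝ) * (Nat.factorial (k u - m u) : ℝ))) *
            (tau κ m * (m r : ℝ)) * (tau κ (k - m) * ((k - m) s : ℝ)))
      = 2 * (((∑ s : S, k s : ℕ) : ℝ) - 1) * tau κ k :=
  tau_recursion_general κ hκsym k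

end
end

section
/- Let κ be a kernel on S and c ∈ [0,∞)^S. (i) If κ is irreducible with respect to c and Σ(κ,c) > 1, then the fixed-point system for c has exactly one solution b* with b* ≠ c, and this solution satisfies Σ(κ,b*) = 1. (ii) If Σ(κ,c) ≤ 1, then the only solution of the fixed-point system for c is b = c. (iii) If Σ(κ,c) > 1 (κ possibly reducible with respect to c), then there exists at least one solution b ≠ c; moreover there is a pointwise-smallest solution b_* (i.e. b_* ≤ b for every solution b), it satisfies Σ(κ,b_*) = 1, and every solution b with b ≠ b_* satisfies Σ(κ,b) > 1. -/
open scoped Classical ENNReal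
open Filter MeasureTheory

noncomputable section

/-!
Solutions `b` are the points `c - a` for the fixed points `a` of the monotone map
`a ↦ c (κ a) / (1 + κ a)` on `[0, c]`; by Knaster–Tarski there is a greatest one `a*`, i.e. a
smallest solution `b* = c - a*`.

For a solution `b ≠ c`, the vector `c - b` is a nonnegative eigenvector of `diag(b) κ` with
eigenvalue `1`, so `Σ(κ, b) ≥ 1`; for solutions `b' < b`, `diag(b) κ` strictly stretches `b - b'`,
so `Σ(κ, b) > 1`. Conversely, if `Σ(κ, b) > 1`, Perron–Frobenius applied to the symmetric matrix
`diag(√b) κ diag(√b)` yields a nonnegative eigenvector `z` of `diag(b) κ` with eigenvalue `σ > 1`.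
It is `κ`-orthogonal to `c - b`, so it lives where `κ (c - b)` vanishes. For `b = b*`, moving `a*`
a little along `z` produces a larger post-fixed point, a contradiction; hence `Σ(κ, b*) ≤ 1`.
Under irreducibility `κ (c - b) > 0` on the support of `c`, which leaves no room for `z`, so every
solution `b ≠ c` has `Σ(κ, b) ≤ 1` and must be `b*`.
-/

open Matrix WithLp Function Topology

section NonnegMatrix

variable {S : Type*} [Fintype S]

theorem Matrix.mulVec_nonneg {A : Matrix S S ℝ} (hA : ∀ i j, 0 ≤ A i j) {x : S → ℝ}
    (hx : 0 ≤ x) : 0 ≤ A *ᵥ x :=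
  fun i => Finset.sum_nonneg fun j _ => mul_nonneg (hA i j) (hx j)

theorem Matrix.mulVec_le_mulVec {A : Matrix S S ℝ} (hA : ∀ i j, 0 ≤ A i j) {x y : S → ℝ}
    (h : x ≤ y) : A *ᵥ x ≤ A *ᵥ y :=
  fun i => Finset.sum_le_sum fun j _ => mul_le_mul_of_nonneg_left (h j) (hA i j)

theorem Matrix.mulVec_dotProduct_self_le_abs {A : Matrix S S ℝ} (hA : ∀ i j, 0 ≤ A i j)
    (x : S → ℝ) : A *ᵥ x ⬝ᵥ A *ᵥ x ≤ A *ᵥ |x| ⬝ᵥ A *ᵥ |x| := by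
  refine Finset.sum_le_sum fun i _ => ?_
  have h : |(A *ᵥ x) i| ≤ (A *ᵥ |x|) i :=
    (Finset.abs_sum_le_sum_abs _ _).trans_eq <| Finset.sum_congr rfl fun j _ => by
      rw [abs_mul, abs_of_nonneg (hA i j)]; rfl
  nlinarith [abs_nonneg ((A *ᵥ x) i), sq_abs ((A *ᵥ x) i)]

theorem Matrix.IsSymm.reApplyInnerSelf_toEuclideanCLM_mul_self {A : Matrix S S ℝ} (hA : A.IsSymm)
    (x : EuclideanSpace ℝ S) :
    (toEuclideanCLM (𝕜 := ℝ) (A * A)).reApplyInnerSelf x = A *ᵥ ofLp x ⬝ᵥ A *ᵥ ofLp x := by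
  rw [ContinuousLinearMap.reApplyInnerSelf_apply, RCLike.re_to_real, real_inner_comm,
    inner_toEuclideanCLM, ← mulVec_mulVec, dotProduct_mulVec, ← mulVec_transpose, hA.eq,
    dotProduct_comm]

theorem Matrix.IsSymm.dotProduct_mulVec_eq_zero_of_eigenvalue_ne {κ : Matrix S S ℝ}
    {ν x z : S → ℝ} {σ τ : ℝ} (hκ : κ.IsSymm) (hx : ν * κ *ᵥ x = τ • x)
    (hz : ν * κ *ᵥ z = σ • z) (hne : σ ≠ τ) : z ⬝ᵥ κ *ᵥ x = 0 := by
  have hsymm : ∀ u w, u ⬝ᵥ κ *ᵥ w = κ *ᵥ u ⬝ᵥ w := fun u w => by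
    rw [dotProduct_mulVec, ← mulVec_transpose, hκ.eq]
  have key : τ * (z ⬝ᵥ κ *ᵥ x) = σ * (z ⬝ᵥ κ *ᵥ x) := calc
    τ * (z ⬝ᵥ κ *ᵥ x) = κ *ᵥ z ⬝ᵥ (ν * κ *ᵥ x) := by rw [hx, dotProduct_smul, hsymm]; rfl
    _ = (ν * κ *ᵥ z) ⬝ᵥ κ *ᵥ x := by
      simp only [dotProduct, Pi.mul_apply]; exact Finset.sum_congr rfl fun _ _ => by ring
    _ = σ * (z ⬝ᵥ κ *ᵥ x) := by rw [hz, smul_dotProduct]; rfl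
  rw [← sub_eq_zero, ← sub_mul] at key
  exact (mul_eq_zero.1 key).resolve_left (sub_ne_zero.2 hne.symm)

theorem EuclideanSpace.mem_sphere_zero_one_iff (x : EuclideanSpace ℝ S) :
    x ∈ Metric.sphere 0 1 ↔ ofLp x ⬝ᵥ ofLp x = 1 := by
  rw [mem_sphere_zero_iff_norm, ← pow_eq_one_iff_of_nonneg (norm_nonneg _) two_ne_zero,
    ← real_inner_self_eq_norm_sq]
  rfl

theorem Matrix.IsSymm.exists_nonneg_eigenvector_mul_self {A : Matrix S S ℝ} (hA : A.IsSymm)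
    (hA0 : ∀ i j, 0 ≤ A i j) {u : S → ℝ} (hu : u ⬝ᵥ u < A *ᵥ u ⬝ᵥ A *ᵥ u) :
    ∃ w, 0 ≤ w ∧ w ⬝ᵥ w = 1 ∧ 1 < A *ᵥ w ⬝ᵥ A *ᵥ w ∧
      A *ᵥ A *ᵥ w = (A *ᵥ w ⬝ᵥ A *ᵥ w) • w := by
  set T := toEuclideanCLM (𝕜 := ℝ) (A * A)
  have hT : IsSelfAdjoint T := by
    refine IsSelfAdjoint.map ?_ _
    have := isHermitian_mul_conjTranspose_self A
    rwa [conjTranspose_eq_transpose_of_trivial, hA.eq, isHermitian_iff_isSelfAdjoint] at this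
  have hQ := hA.reApplyInnerSelf_toEuclideanCLM_mul_self
  have hu0 : 0 < u ⬝ᵥ u := lt_of_le_of_ne (dotProduct_self_star_nonneg u) fun h => by
    rw [dotProduct_self_eq_zero.1 h.symm] at hu
    simp at hu
  set c := (√(u ⬝ᵥ u))⁻¹
  have hc : c ^ 2 * (u ⬝ᵥ u) = 1 := by
    rw [inv_pow, Real.sq_sqrt hu0.le, inv_mul_cancel₀ hu0.ne']
  have hcu : toLp 2 (c • u) ∈ Metric.sphere 0 1 := by
    rw [EuclideanSpace.mem_sphere_zero_one_iff]
    simpa [smul_dotProduct, dotProduct_smul, ← mul_assoc, sq] using hc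
  -- a maximiser `x` of `‖A x‖` on the unit sphere can be replaced by `|x|`, and is then a
  -- nonnegative critical point of the Rayleigh quotient of `A * A`
  obtain ⟨x, hx, hmax⟩ := (isCompact_sphere (0 : EuclideanSpace ℝ S) 1).exists_isMaxOn
    ⟨_, hcu⟩ T.reApplyInnerSelf_continuous.continuousOn
  set w : S → ℝ := |ofLp x|
  have hw : w ⬝ᵥ w = 1 := by
    rw [← (EuclideanSpace.mem_sphere_zero_one_iff x).1 hx]
    exact Finset.sum_congr rfl fun i _ => abs_mul_abs_self _
  have hw1 : ‖toLp 2 w‖ = 1 :=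
    mem_sphere_zero_iff_norm.1 ((EuclideanSpace.mem_sphere_zero_one_iff _).2 hw)
  have hmaxw : IsMaxOn T.reApplyInnerSelf (Metric.sphere 0 ‖toLp 2 w‖) (toLp 2 w) := by
    intro z hz
    rw [hw1] at hz
    have h : T.reApplyInnerSelf z ≤ T.reApplyInnerSelf x := hmax hz
    exact h.trans (by rw [hQ, hQ]; exact mulVec_dotProduct_self_le_abs hA0 _)
  refine ⟨w, abs_nonneg _, hw, ?_, ?_⟩
  · have h : T.reApplyInnerSelf (toLp 2 (c • u)) ≤ T.reApplyInnerSelf (toLp 2 w) := by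
      rw [hw1] at hmaxw; exact hmaxw hcu
    rw [hQ, hQ] at h
    simp only [mulVec_smul, smul_dotProduct, dotProduct_smul, smul_eq_mul] at h
    nlinarith
  · have h := congrArg ofLp (hT.eq_smul_self_of_isLocalExtrOn_real (Or.inr hmaxw.localize))
    rwa [ContinuousLinearMap.rayleighQuotient, hQ, hw1, one_pow, div_one, ofLp_toEuclideanCLM,
      ← mulVec_mulVec] at h

theorem Matrix.IsSymm.exists_nonneg_eigenvector {A : Matrix S S ℝ} (hA : A.IsSymm)
    (hA0 : ∀ i j, 0 ≤ A i j) {u : S → ℝ} (hu : u ⬝ᵥ u < A *ᵥ u ⬝ᵥ A *ᵥ u) :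
    ∃ σ : ℝ, 1 < σ ∧ ∃ v, 0 ≤ v ∧ v ≠ 0 ∧ A *ᵥ v = σ • v := by
  obtain ⟨w, hw0, hw, hμ, hAAw⟩ := hA.exists_nonneg_eigenvector_mul_self hA0 hu
  set μ := A *ᵥ w ⬝ᵥ A *ᵥ w
  have hAw : 0 ≤ A *ᵥ w := mulVec_nonneg hA0 hw0
  -- `A² w = μ w` factors as `(A - √μ)(A + √μ) w = 0`.
  refine ⟨√μ, by rwa [Real.lt_sqrt zero_le_one, one_pow], A *ᵥ w + √μ • w,
    add_nonneg hAw (smul_nonneg (by positivity) hw0), fun h0 => ?_, ?_⟩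
  · have : √μ • w ≤ 0 := by rw [← h0]; exact le_add_of_nonneg_left hAw
    have hw00 : w = 0 := le_antisymm
      (fun i => nonpos_of_mul_nonpos_right (this i) (by positivity)) hw0
    simp [hw00] at hw
  · rw [mulVec_add, mulVec_smul, hAAw, smul_add, smul_smul, Real.mul_self_sqrt (by positivity),
      add_comm]

end NonnegMatrix

section SigmaOp

variable {S : Type*} [Fintype S] {κ : Matrix S S ℝ} {ν : S → ℝ}

theorem bddAbove_sigmaOp_set (κ : Matrix S S ℝ) (hν : 0 ≤ ν) :
    BddAbove {t : ℝ | ∃ f : S → ℝ, (∀ s, 0 ≤ f s) ∧ (∑ r : S, ν r * f r ^ 2) ≤ 1 ∧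
      t = √(∑ r : S, ν r * (∑ s : S, κ r s * f s * ν s) ^ 2)} := by
  -- the value only depends on `f * ν`, which lies in the box `[0, √ν]`
  refine ((isCompact_Icc (a := 0) (b := fun s => √(ν s))).image
    (f := fun g : S → ℝ => √(∑ r, ν r * (κ *ᵥ g) r ^ 2)) (by fun_prop)).bddAbove.mono ?_
  rintro t ⟨f, hf0, hf1, rfl⟩
  refine ⟨f * ν, ⟨fun s => mul_nonneg (hf0 s) (hν s), fun s => ?_⟩, ?_⟩
  · have : ν s * f s ^ 2 ≤ 1 :=
      (Finset.single_le_sum (fun r _ => mul_nonneg (hν r) (sq_nonneg (f r)))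
        (Finset.mem_univ s)).trans hf1
    refine (Real.le_sqrt (mul_nonneg (hf0 s) (hν s)) (hν s)).2 ?_
    calc (f s * ν s) ^ 2 = ν s * (ν s * f s ^ 2) := by ring
      _ ≤ ν s * 1 := mul_le_mul_of_nonneg_left this (hν s)
      _ = ν s := mul_one _
  · simp only [mulVec, dotProduct, Pi.mul_apply, mul_assoc]

theorem le_sigmaOp (hν : 0 ≤ ν) {f : S → ℝ} (hf0 : 0 ≤ f) (hf1 : ∑ r, ν r * f r ^ 2 ≤ 1) :
    √(∑ r, ν r * (∑ s, κ r s * f s * ν s) ^ 2) ≤ sigmaOp κ ν :=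
  le_csSup (bddAbove_sigmaOp_set κ hν) ⟨f, hf0, hf1, rfl⟩

theorem sigmaOp_nonneg (hν : 0 ≤ ν) : 0 ≤ sigmaOp κ ν := by
  simpa using le_sigmaOp (κ := κ) hν le_rfl (by simp)

theorem sum_sq_le_sigmaOp_sq_mul (hν : 0 ≤ ν) {f : S → ℝ} (hf0 : 0 ≤ f) :
    ∑ r, ν r * (∑ s, κ r s * f s * ν s) ^ 2 ≤ sigmaOp κ ν ^ 2 * ∑ r, ν r * f r ^ 2 := by
  have hterm : ∀ r, 0 ≤ ν r * f r ^ 2 := fun r => mul_nonneg (hν r) (sq_nonneg _)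
  rcases (Finset.sum_nonneg fun r _ => hterm r).eq_or_lt with hN | hN
  · have hzero : ∀ s, f s * ν s = 0 := fun s => by
      rcases mul_eq_zero.1 ((Finset.sum_eq_zero_iff_of_nonneg fun r _ => hterm r).1 hN.symm s
        (Finset.mem_univ s)) with h | h
      · simp [h]
      · simp [pow_eq_zero_iff two_ne_zero |>.1 h]
    rw [← hN]
    simp [mul_assoc, hzero]
  · have hscale : ∀ x : ℝ, ((√(∑ r, ν r * f r ^ 2))⁻¹ * x) ^ 2 = x ^ 2 / ∑ r, ν r * f r ^ 2 :=
      fun x => by rw [mul_pow, inv_pow, Real.sq_sqrt hN.le, inv_mul_eq_div]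
    set g := (√(∑ r, ν r * f r ^ 2))⁻¹ • f
    have hg : ∑ r, ν r * g r ^ 2 = 1 := by
      simp only [g, Pi.smul_apply, smul_eq_mul, hscale, mul_div_assoc', ← Finset.sum_div]
      exact div_self hN.ne'
    have h := le_sigmaOp (κ := κ) hν (smul_nonneg (by positivity) hf0) hg.le
    rw [Real.sqrt_le_left (sigmaOp_nonneg hν)] at h
    have hTg : ∑ r, ν r * (∑ s, κ r s * g s * ν s) ^ 2 =
        (∑ r, ν r * (∑ s, κ r s * f s * ν s) ^ 2) / ∑ r, ν r * f r ^ 2 := by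
      simp only [Finset.sum_div, mul_div_assoc, ← hscale, Finset.mul_sum]
      refine Finset.sum_congr rfl fun r _ => ?_
      congr 2
      exact Finset.sum_congr rfl fun s _ => by simp only [g, Pi.smul_apply, smul_eq_mul]; ring
    rwa [hTg, div_le_iff₀ hN] at h

theorem le_sigmaOp_of_smul_le (hκ0 : ∀ r s, 0 ≤ κ r s) (hν : 0 ≤ ν) {z : S → ℝ} (hz0 : 0 ≤ z)
    (hz : z ≠ 0) {ρ : ℝ} (h : ρ • z ≤ ν * κ *ᵥ z) : ρ ≤ sigmaOp κ ν := by
  rcases le_or_gt ρ 0 with hρ | hρ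
  · exact hρ.trans (sigmaOp_nonneg hν)
  -- test against `f = κ z`, which satisfies `ρ f ≤ κ (ν f)`
  set f := κ *ᵥ z
  have hf0 : 0 ≤ f := mulVec_nonneg hκ0 hz0
  have hTf : ∀ r, ρ * f r ≤ ∑ s, κ r s * f s * ν s := fun r => calc
    ρ * f r = (κ *ᵥ (ρ • z)) r := by rw [mulVec_smul]; rfl
    _ ≤ (κ *ᵥ (ν * f)) r := mulVec_le_mulVec hκ0 h r
    _ = ∑ s, κ r s * f s * ν s := Finset.sum_congr rfl fun s _ => by
      simp only [Pi.mul_apply]; ring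
  obtain ⟨r, hr⟩ : ∃ r, 0 < z r := by
    obtain ⟨r, hr⟩ := Function.ne_iff.1 hz
    exact ⟨r, lt_of_le_of_ne (hz0 r) (Ne.symm hr)⟩
  have hνf : 0 < ν r * f r := (mul_pos hρ hr).trans_le (h r)
  have hN : 0 < ∑ r, ν r * f r ^ 2 := by
    refine (Finset.single_le_sum (fun r _ => mul_nonneg (hν r) (sq_nonneg (f r)))
      (Finset.mem_univ r)).trans_lt' ?_
    nlinarith [pos_of_mul_pos_right hνf (hν r)]
  have hlow : ρ ^ 2 * ∑ r, ν r * f r ^ 2 ≤ ∑ r, ν r * (∑ s, κ r s * f s * ν s) ^ 2 := by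
    rw [Finset.mul_sum]
    refine Finset.sum_le_sum fun r _ => ?_
    calc ρ ^ 2 * (ν r * f r ^ 2) = ν r * (ρ * f r) ^ 2 := by ring
      _ ≤ _ := mul_le_mul_of_nonneg_left
        (pow_le_pow_left₀ (mul_nonneg hρ.le (hf0 r)) (hTf r) 2) (hν r)
  have := le_of_mul_le_mul_right (hlow.trans (sum_sq_le_sigmaOp_sq_mul hν hf0)) hN
  exact (pow_le_pow_iff_left₀ hρ.le (sigmaOp_nonneg hν) two_ne_zero).1 this

theorem one_lt_sigmaOp_of_lt (hκ0 : ∀ r s, 0 ≤ κ r s) (hν : 0 ≤ ν) {z : S → ℝ} (hz0 : 0 ≤ z)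
    (hz : z ≠ 0) (h : ∀ r, 0 < z r → z r < ν r * (κ *ᵥ z) r) : 1 < sigmaOp κ ν := by
  -- finitely many strict inequalities survive a small increase of the ratio `1`
  have hev : ∀ᶠ ρ in 𝓝 (1 : ℝ), ρ • z ≤ ν * κ *ᵥ z := by
    refine Filter.eventually_all.2 fun r => ?_
    rcases (hz0 r).eq_or_lt with hr | hr
    · exact Filter.Eventually.of_forall fun ρ => by
        simpa [← hr] using mul_nonneg (hν r) (mulVec_nonneg hκ0 hz0 r)
    · exact ((continuous_id.mul continuous_const).continuousAt.eventually_lt continuousAt_const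
        (by simpa using h r hr)).mono fun ρ hρ => hρ.le
  obtain ⟨ρ, hρ, hρ1⟩ := ((hev.filter_mono nhdsWithin_le_nhds).and
    (self_mem_nhdsWithin (s := Set.Ioi 1))).exists
  exact lt_of_lt_of_le hρ1 (le_sigmaOp_of_smul_le hκ0 hν hz0 hz hρ)

theorem exists_eigenvector_of_one_lt_sigmaOp (hκ : κ.IsSymm) (hκ0 : ∀ r s, 0 ≤ κ r s)
    (hν : 0 ≤ ν) (h : 1 < sigmaOp κ ν) :
    ∃ σ : ℝ, 1 < σ ∧ ∃ z, 0 ≤ z ∧ z ≠ 0 ∧ ν * κ *ᵥ z = σ • z := by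
  obtain ⟨_, ⟨f, hf0, hf1, rfl⟩, hf⟩ := exists_lt_of_lt_csSup
    (by exact ⟨0, fun _ => 0, fun _ => le_rfl, by simp, by simp⟩) h
  -- symmetrise: `A = diag(√ν) κ diag(√ν)`
  set q : S → ℝ := fun r => √(ν r)
  have hq : ∀ r, q r * q r = ν r := fun r => Real.mul_self_sqrt (hν r)
  set A := diagonal q * κ * diagonal q
  have hD : ∀ x, diagonal q *ᵥ x = q * x := fun x => funext (mulVec_diagonal q x)
  have hA : ∀ x, A *ᵥ x = q * κ *ᵥ (q * x) := fun x => by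
    rw [← mulVec_mulVec, ← mulVec_mulVec, hD, hD]
  have hAsymm : A.IsSymm := IsSymm.ext fun i j => by
    simp [A, diagonal_mul, mul_diagonal, hκ.apply]; ring
  have hA0 : ∀ i j, 0 ≤ A i j := fun i j => by
    simp only [A, diagonal_mul, mul_diagonal]; have := hκ0 i j; positivity
  have hu : (q * f) ⬝ᵥ (q * f) < A *ᵥ (q * f) ⬝ᵥ A *ᵥ (q * f) := by
    have hκf : ∀ r, (κ *ᵥ (q * (q * f))) r = ∑ s, κ r s * f s * ν s := fun r =>
      Finset.sum_congr rfl fun s _ => by simp only [Pi.mul_apply]; rw [← hq s]; ring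
    have h1 : (q * f) ⬝ᵥ (q * f) = ∑ r, ν r * f r ^ 2 :=
      Finset.sum_congr rfl fun r _ => by simp only [Pi.mul_apply]; rw [← hq r]; ring
    have h2 : A *ᵥ (q * f) ⬝ᵥ A *ᵥ (q * f) = ∑ r, ν r * (∑ s, κ r s * f s * ν s) ^ 2 :=
      Finset.sum_congr rfl fun r _ => by simp only [hA, Pi.mul_apply, hκf]; rw [← hq r]; ring
    rw [h1, h2]
    exact hf1.trans_lt (by simpa using (Real.lt_sqrt zero_le_one).1 hf)
  obtain ⟨σ, hσ, v, hv0, hv, hAv⟩ := hAsymm.exists_nonneg_eigenvector hA0 hu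
  refine ⟨σ, hσ, q * v, mul_nonneg (fun r => Real.sqrt_nonneg _) hv0, fun hz => hv ?_, ?_⟩
  · have : σ • v = 0 := by rw [← hAv, hA, hz, mulVec_zero, mul_zero]
    exact (smul_eq_zero.1 this).resolve_left (by positivity)
  · ext r
    simp only [Pi.mul_apply, Pi.smul_apply, smul_eq_mul]
    rw [← hq r, mul_assoc, ← Pi.mul_apply q (κ *ᵥ (q * v)), ← hA, hAv]
    simp only [Pi.smul_apply, smul_eq_mul]; ring

end SigmaOp

section FixedPointSystem

variable {S : Type*} [Fintype S] {κ : Matrix S S ℝ} {c b : S → ℝ}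

theorem isFPSol_iff : IsFPSol κ c b ↔ 0 ≤ b ∧ b ≤ c ∧ b * κ *ᵥ (c - b) = c - b := by
  simp only [IsFPSol, Pi.le_def, funext_iff, Pi.mul_apply, Pi.sub_apply, Pi.zero_apply,
    mul_comm (b _)]
  rfl

theorem isFPSol_self (hc : 0 ≤ c) : IsFPSol κ c c :=
  isFPSol_iff.2 ⟨hc, le_rfl, by simp⟩

/-- `b` solves the fixed-point system for `c` iff `c - b` is a fixed point of this map. -/
def fpMap (κ : Matrix S S ℝ) (c a : S → ℝ) : S → ℝ := c * (κ *ᵥ a / (1 + κ *ᵥ a))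

variable {a a' : S → ℝ}

theorem fpMap_nonneg (hκ0 : ∀ r s, 0 ≤ κ r s) (hc : 0 ≤ c) (ha : 0 ≤ a) : 0 ≤ fpMap κ c a :=
  fun r => by
    have : 0 ≤ (κ *ᵥ a) r := mulVec_nonneg hκ0 ha r
    have : 0 ≤ c r := hc r
    simp only [fpMap, Pi.mul_apply, Pi.div_apply, Pi.add_apply, Pi.one_apply, Pi.zero_apply]
    positivity

theorem fpMap_le (hκ0 : ∀ r s, 0 ≤ κ r s) (hc : 0 ≤ c) (ha : 0 ≤ a) : fpMap κ c a ≤ c :=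
  fun r => mul_le_of_le_one_right (hc r) <| by
    have : 0 ≤ (κ *ᵥ a) r := mulVec_nonneg hκ0 ha r
    simp only [Pi.div_apply, Pi.add_apply, Pi.one_apply]
    rw [div_le_one (by positivity)]; linarith

theorem fpMap_mono (hκ0 : ∀ r s, 0 ≤ κ r s) (hc : 0 ≤ c) (ha : 0 ≤ a) (h : a ≤ a') :
    fpMap κ c a ≤ fpMap κ c a' := fun r => by
  have h0 : 0 ≤ (κ *ᵥ a) r := mulVec_nonneg hκ0 ha r
  have h1 := mulVec_le_mulVec hκ0 h r
  refine mul_le_mul_of_nonneg_left ?_ (hc r)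
  simp only [Pi.div_apply, Pi.add_apply, Pi.one_apply]
  rw [div_le_div_iff₀ (by positivity) (by linarith)]
  nlinarith

theorem fpMap_apply_eq_iff (hκ0 : ∀ r s, 0 ≤ κ r s) (ha : 0 ≤ a) (r : S) :
    fpMap κ c a r = a r ↔ (c r - a r) * (κ *ᵥ a) r = a r := by
  have : 0 ≤ (κ *ᵥ a) r := mulVec_nonneg hκ0 ha r
  simp only [fpMap, Pi.mul_apply, Pi.div_apply, Pi.add_apply, Pi.one_apply]
  rw [← mul_div_assoc, div_eq_iff (by positivity)]
  constructor <;> intro h <;> linarith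

theorem isFPSol_iff_isFixedPt (hκ0 : ∀ r s, 0 ≤ κ r s) (hc : 0 ≤ c) :
    IsFPSol κ c b ↔ b ≤ c ∧ IsFixedPt (fpMap κ c) (c - b) := by
  rw [isFPSol_iff]
  have hfix : b ≤ c → ∀ r,
      (fpMap κ c (c - b) r = (c - b) r ↔ (b * κ *ᵥ (c - b)) r = (c - b) r) := fun hbc r => by
    rw [fpMap_apply_eq_iff hκ0 (sub_nonneg.2 hbc)]
    simp only [Pi.sub_apply, Pi.mul_apply, sub_sub_cancel]
  refine ⟨fun ⟨_, hbc, h⟩ => ⟨hbc, funext fun r => (hfix hbc r).2 (congrFun h r)⟩,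
    fun ⟨hbc, h⟩ => ⟨?_, hbc, funext fun r => (hfix hbc r).1 (congrFun h r)⟩⟩
  have := fpMap_le hκ0 hc (sub_nonneg.2 hbc)
  rw [h] at this
  simpa using this

theorem exists_greatest_isFixedPt_fpMap (hκ0 : ∀ r s, 0 ≤ κ r s) (hc : 0 ≤ c) :
    ∃ a, 0 ≤ a ∧ IsFixedPt (fpMap κ c) a ∧ ∀ a', 0 ≤ a' → a' ≤ fpMap κ c a' → a' ≤ a := by
  have : Fact (0 ≤ c) := ⟨hc⟩
  let F : Set.Icc 0 c →o Set.Icc 0 c :=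
    { toFun := fun a => ⟨fpMap κ c a, fpMap_nonneg hκ0 hc a.2.1, fpMap_le hκ0 hc a.2.1⟩
      monotone' := fun a a' h => fpMap_mono hκ0 hc a.2.1 h }
  refine ⟨(OrderHom.gfp F).1, (OrderHom.gfp F).2.1, congrArg Subtype.val F.map_gfp,
    fun a' ha' h => ?_⟩
  exact F.le_gfp (a := ⟨a', ha', h.trans (fpMap_le hκ0 hc ha')⟩) h

theorem exists_lt_le_fpMap (hκ0 : ∀ r s, 0 ≤ κ r s) (hc : 0 ≤ c) (ha : 0 ≤ a)
    (hfix : IsFixedPt (fpMap κ c) a) {σ : ℝ} (hσ : 1 < σ) {z : S → ℝ} (hz0 : 0 ≤ z) (hz : z ≠ 0)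
    (heig : (c - a) * κ *ᵥ z = σ • z) (horth : z * κ *ᵥ a = 0) :
    ∃ a', a < a' ∧ a' ≤ fpMap κ c a' := by
  -- take `a' = a + t z` with `t > 0` so small that `1 + t (κ z)_r ≤ σ` for all `r`
  have hev : ∀ᶠ t in 𝓝 (0 : ℝ), ∀ r, t * (κ *ᵥ z) r < σ - 1 :=
    Filter.eventually_all.2 fun r => (continuous_id.mul continuous_const).continuousAt.eventually_lt
      continuousAt_const (by simpa using hσ)
  obtain ⟨t, ht, ht0⟩ := ((hev.filter_mono nhdsWithin_le_nhds).and
    (self_mem_nhdsWithin (s := Set.Ioi 0))).exists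
  have hlt : a < a + t • z := lt_add_of_pos_right a (smul_pos ht0 (lt_of_le_of_ne hz0 hz.symm))
  refine ⟨a + t • z, hlt, fun r => ?_⟩
  rcases (hz0 r).eq_or_lt with hr | hr
  · calc (a + t • z) r = fpMap κ c a r := by simp [← hr, hfix.eq]
      _ ≤ _ := fpMap_mono hκ0 hc ha hlt.le r
  · have hκa : (κ *ᵥ a) r = 0 := (mul_eq_zero.1 (congrFun horth r)).resolve_left hr.ne'
    have har : a r = 0 := by
      rw [← (fpMap_apply_eq_iff hκ0 ha r).1 (congrFun hfix r), hκa, mul_zero]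
    have hcr : c r * (κ *ᵥ z) r = σ * z r := by simpa [har] using congrFun heig r
    have hκz : 0 ≤ (κ *ᵥ z) r := mulVec_nonneg hκ0 hz0 r
    simp only [fpMap, Pi.mul_apply, Pi.div_apply, Pi.add_apply, Pi.one_apply, Pi.smul_apply,
      smul_eq_mul, mulVec_add, mulVec_smul, hκa, har, zero_add]
    rw [← mul_div_assoc, le_div_iff₀ (by positivity)]
    nlinarith [mul_pos ht0 hr, ht r]

namespace IsFPSol

variable {b' : S → ℝ}

theorem one_le_sigmaOp (hκ0 : ∀ r s, 0 ≤ κ r s) (hb : IsFPSol κ c b) (hbc : b ≠ c) :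
    1 ≤ sigmaOp κ b := by
  obtain ⟨hb0, hbc', heq⟩ := isFPSol_iff.1 hb
  exact le_sigmaOp_of_smul_le hκ0 hb0 (sub_nonneg.2 hbc') (sub_ne_zero.2 hbc.symm)
    (by rw [one_smul, heq])

theorem one_lt_sigmaOp (hκ0 : ∀ r s, 0 ≤ κ r s) (hb : IsFPSol κ c b) (hb' : IsFPSol κ c b')
    (hlt : b' < b) : 1 < sigmaOp κ b := by
  obtain ⟨hb0, hbc, heq⟩ := isFPSol_iff.1 hb
  obtain ⟨hb'0, -, heq'⟩ := isFPSol_iff.1 hb'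
  refine one_lt_sigmaOp_of_lt hκ0 hb0 (sub_nonneg.2 hlt.le) (sub_ne_zero.2 hlt.ne') fun r hr => ?_
  have hid : c r * (b r - b' r) = b r * b' r * (κ *ᵥ (b - b')) r := by
    have h1 := congrFun heq r
    have h2 := congrFun heq' r
    rw [show b - b' = (c - b') - (c - b) by abel, mulVec_sub]
    simp only [Pi.mul_apply, Pi.sub_apply] at h1 h2 ⊢
    linear_combination b' r * h1 - b r * h2
  simp only [Pi.sub_apply, sub_pos] at hr ⊢
  have hcr : b r ≤ c r := hbc r
  have hb'r : 0 < b' r := by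
    refine lt_of_le_of_ne (hb'0 r) fun h => ?_
    rw [← h, mul_zero, zero_mul] at hid
    nlinarith [hb'0 r]
  refine lt_of_mul_lt_mul_left ?_ hb'r.le
  nlinarith

theorem exists_eigenvector (hκ : κ.IsSymm) (hκ0 : ∀ r s, 0 ≤ κ r s) (hb : IsFPSol κ c b)
    (h : 1 < sigmaOp κ b) :
    ∃ σ : ℝ, 1 < σ ∧ ∃ z, 0 ≤ z ∧ z ≠ 0 ∧ b * κ *ᵥ z = σ • z ∧ z * κ *ᵥ (c - b) = 0 := by
  obtain ⟨hb0, hbc, heq⟩ := isFPSol_iff.1 hb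
  obtain ⟨σ, hσ, z, hz0, hz, heig⟩ := exists_eigenvector_of_one_lt_sigmaOp hκ hκ0 hb0 h
  refine ⟨σ, hσ, z, hz0, hz, heig, ?_⟩
  have horth := hκ.dotProduct_mulVec_eq_zero_of_eigenvalue_ne (τ := 1) (by rwa [one_smul]) heig
    hσ.ne'
  have hnn : ∀ r, 0 ≤ z r * (κ *ᵥ (c - b)) r := fun r =>
    mul_nonneg (hz0 r) (mulVec_nonneg hκ0 (sub_nonneg.2 hbc) r)
  exact funext fun r => (Finset.sum_eq_zero_iff_of_nonneg fun r _ => hnn r).1 horth r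
    (Finset.mem_univ r)

theorem mulVec_sub_pos_of_irred (hκ : κ.IsSymm) (hκ0 : ∀ r s, 0 ≤ κ r s) (hb : IsFPSol κ c b)
    (hirr : Irred κ c) (hbc : b ≠ c) {r : S} (hr : 0 < c r) : 0 < (κ *ᵥ (c - b)) r := by
  obtain ⟨hb0, hbc', heq⟩ := isFPSol_iff.1 hb
  -- `{b < c}` is closed under `κ` inside the support of `c`
  have hclosed : ∀ r ∈ {r | b r < c r}, ∀ s, s ∉ {r | b r < c r} → 0 < c r → 0 < c s →
      κ r s = 0 := by
    intro r hr s hs _ hcs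
    have hs' : b s = c s := le_antisymm (hbc' s) (not_lt.1 hs)
    have h0 : (κ *ᵥ (c - b)) s = 0 := by
      have := congrFun heq s
      simp only [Pi.mul_apply, Pi.sub_apply, hs', sub_self] at this
      exact (mul_eq_zero.1 this).resolve_left hcs.ne'
    have hle : κ s r * (c - b) r ≤ (κ *ᵥ (c - b)) s :=
      Finset.single_le_sum (f := fun t => κ s t * (c - b) t)
        (fun t _ => mul_nonneg (hκ0 s t) (sub_nonneg.2 (hbc' t))) (Finset.mem_univ r)
    rw [h0, hκ.apply] at hle
    exact le_antisymm (nonpos_of_mul_nonpos_left hle (sub_pos.2 hr)) (hκ0 r s)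
  rcases hirr {r | b r < c r} hclosed with h | h
  · obtain ⟨s, hs⟩ := Function.ne_iff.1 hbc
    have hlt : b s < c s := lt_of_le_of_ne (hbc' s) hs
    exact absurd (h s hlt) ((hb0 s).trans_lt hlt).ne'
  · have hr' : b r < c r := by_contra fun h' => hr.ne' (h r h')
    have := congrFun heq r
    simp only [Pi.mul_apply, Pi.sub_apply] at this
    exact pos_of_mul_pos_right (this ▸ sub_pos.2 hr') (hb0 r)

theorem sigmaOp_le_one_of_irred (hκ : κ.IsSymm) (hκ0 : ∀ r s, 0 ≤ κ r s) (hb : IsFPSol κ c b)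
    (hirr : Irred κ c) (hbc : b ≠ c) : sigmaOp κ b ≤ 1 := by
  by_contra! h
  obtain ⟨σ, hσ, z, hz0, hz, heig, horth⟩ := hb.exists_eigenvector hκ hκ0 h
  refine hz (funext fun r => by_contra fun hzr => ?_)
  have hzr : 0 < z r := lt_of_le_of_ne (hz0 r) (Ne.symm hzr)
  -- `z` lives where `κ (c - b)` vanishes, which by irreducibility is outside the support of `c`
  have hκa : (κ *ᵥ (c - b)) r = 0 := (mul_eq_zero.1 (congrFun horth r)).resolve_left hzr.ne'
  have hcr : c r = 0 := by
    by_contra hcr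
    have : 0 < c r := lt_of_le_of_ne ((hb.1 r).trans (hb.2.1 r)) (Ne.symm hcr)
    exact (hb.mulVec_sub_pos_of_irred hκ hκ0 hirr hbc this).ne' hκa
  have hbr : b r = 0 := le_antisymm (hcr ▸ hb.2.1 r) (hb.1 r)
  have := congrFun heig r
  simp only [Pi.mul_apply, Pi.smul_apply, smul_eq_mul, hbr, zero_mul] at this
  exact (mul_pos (zero_lt_one.trans hσ) hzr).ne' this.symm

end IsFPSol

theorem exists_minimal_isFPSol (hκ : κ.IsSymm) (hκ0 : ∀ r s, 0 ≤ κ r s) (hc : 0 ≤ c) :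
    ∃ bmin, IsFPSol κ c bmin ∧ (∀ b, IsFPSol κ c b → bmin ≤ b) ∧ sigmaOp κ bmin ≤ 1 := by
  obtain ⟨a, ha0, hfix, hmax⟩ := exists_greatest_isFixedPt_fpMap hκ0 hc
  have hsol : IsFPSol κ c (c - a) :=
    (isFPSol_iff_isFixedPt hκ0 hc).2 ⟨sub_le_self _ ha0, by rwa [sub_sub_cancel]⟩
  refine ⟨c - a, hsol, fun b hb => ?_, ?_⟩
  · obtain ⟨hbc, hbfix⟩ := (isFPSol_iff_isFixedPt hκ0 hc).1 hb
    exact sub_le_comm.1 (hmax (c - b) (sub_nonneg.2 hbc) hbfix.ge)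
  · -- otherwise a Perron vector of `diag(c - a) κ` pushes `a` past the greatest post-fixed point
    by_contra! h
    obtain ⟨σ, hσ, z, hz0, hz, heig, horth⟩ := hsol.exists_eigenvector hκ hκ0 h
    rw [sub_sub_cancel] at horth
    obtain ⟨a', ha', hsub⟩ := exists_lt_le_fpMap hκ0 hc ha0 hfix hσ hz0 hz heig horth
    exact (hmax a' (ha0.trans ha'.le) hsub).not_gt ha'

end FixedPointSystem

theorem fixed_point_system_solutions_general
    {S : Type*} [Fintype S]
    (κ : S → S → ℝ) (hκsym : ∀ r s, κ r s = κ s r) (hκ0 : ∀ r s, 0 ≤ κ r s)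
    (c : S → ℝ) (hc : ∀ r, 0 ≤ c r) :
    (Irred κ c → 1 < sigmaOp κ c →
        (∃! b : S → ℝ, IsFPSol κ c b ∧ b ≠ c) ∧
        ∀ b : S → ℝ, IsFPSol κ c b → b ≠ c → sigmaOp κ b = 1) ∧
      (sigmaOp κ c ≤ 1 → ∀ b : S → ℝ, IsFPSol κ c b → b = c) ∧
      (1 < sigmaOp κ c →
        (∃ b : S → ℝ, IsFPSol κ c b ∧ b ≠ c) ∧
        ∃ bmin : S → ℝ, IsFPSol κ c bmin ∧
          (∀ b : S → ℝ, IsFPSol κ c b → ∀ r, bmin r ≤ b r) ∧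
          sigmaOp κ bmin = 1 ∧
          ∀ b : S → ℝ, IsFPSol κ c b → b ≠ bmin → 1 < sigmaOp κ b) := by
  have hκ : Matrix.IsSymm (κ : Matrix S S ℝ) := IsSymm.ext fun r s => hκsym s r
  obtain ⟨bmin, hmin, hle, hσmin⟩ := exists_minimal_isFPSol hκ hκ0 hc
  have hgt : ∀ b, IsFPSol κ c b → b ≠ bmin → 1 < sigmaOp κ b := fun b hb hne =>
    hb.one_lt_sigmaOp hκ0 hmin (lt_of_le_of_ne (hle b hb) hne.symm)
  have hne : 1 < sigmaOp κ c → bmin ≠ c := fun h he => (he ▸ hσmin).not_gt h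
  have hσ1 : 1 < sigmaOp κ c → sigmaOp κ bmin = 1 := fun h =>
    le_antisymm hσmin (hmin.one_le_sigmaOp hκ0 (hne h))
  refine ⟨fun hirr h => ?_, fun h b hb => by_contra fun hbc => ?_,
    fun h => ⟨⟨bmin, hmin, hne h⟩, bmin, hmin, hle, hσ1 h, hgt⟩⟩
  · have huniq : ∀ b, IsFPSol κ c b → b ≠ c → b = bmin := fun b hb hbc =>
      by_contra fun hb' => (hb.sigmaOp_le_one_of_irred hκ hκ0 hirr hbc).not_gt (hgt b hb hb')
    exact ⟨⟨bmin, ⟨hmin, hne h⟩, fun b hb => huniq b hb.1 hb.2⟩,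
      fun b hb hbc => huniq b hb hbc ▸ hσ1 h⟩
  · exact h.not_gt ((isFPSol_self hc).one_lt_sigmaOp hκ0 hb (lt_of_le_of_ne hb.2.1 hbc))

/-- solutions of the fixed-point system. -/
theorem fixed_point_system_solutions
    {S : Type*} [Fintype S] [DecidableEq S] [Nonempty S]
    (κ : S → S → ℝ) (hκsym : ∀ r s, κ r s = κ s r) (hκ0 : ∀ r s, 0 ≤ κ r s)
    (c : S → ℝ) (hc : ∀ r, 0 ≤ c r) :
    (Irred κ c → 1 < sigmaOp κ c →
        (∃! b : S → ℝ, IsFPSol κ c b ∧ b ≠ c) ∧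
        ∀ b : S → ℝ, IsFPSol κ c b → b ≠ c → sigmaOp κ b = 1) ∧
      (sigmaOp κ c ≤ 1 → ∀ b : S → ℝ, IsFPSol κ c b → b = c) ∧
      (1 < sigmaOp κ c →
        (∃ b : S → ℝ, IsFPSol κ c b ∧ b ≠ c) ∧
        ∃ bmin : S → ℝ, IsFPSol κ c bmin ∧
          (∀ b : S → ℝ, IsFPSol κ c b → ∀ r, bmin r ≤ b r) ∧
          sigmaOp κ bmin = 1 ∧
          ∀ b : S → ℝ, IsFPSol κ c b → b ≠ bmin → 1 < sigmaOp κ b) :=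
  fixed_point_system_solutions_general κ hκsym hκ0 c hc
end
end
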